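/- arXiv:1804.05394 — 8 statements merged into one kernel-verified Lean document; each statement's English description precedes it below -/
import Mathlib

section
/- Let $X=(X_n)_{n=0}^N$ be an $\mathbb{R}^d$-valued discrete-time Markov process with $\mathbb{E}|g(m, X_m)| < \infty$ for all $m$, where $g : \{0,\dots,N\}\times\mathbb{R}^d \to \mathbb{R}$ is measurable. Fix $n \in \{0,\dots,N-1\}$ and let $\tau_{n+1} = \sum_{m=n+1}^N m f_m(X_m) \prod_{j=n+1}^{m-1}(1-f_j(X_j))$ for measurable $f_{n+1},\dots,f_N : \mathbb{R}^d \to \{0,1\}$ with $f_N \equiv 1$. Then there exists a measurable function $f_n : \mathbb{R}^d \to \{0,1\}$ such that the stopping time $\tau_n = \sum_{m=n}^N m f_m(X_m) \prod_{j=n}^{m-1}(1-f_j(X_j))$ satisfies $\mathbb{E}\, g(\tau_n, X_{\tau_n}) \ge V_n - (V_{n+1} - \mathbb{E}\, g(\tau_{n+1}, X_{\tau_{n+1}}))$, where $V_k = \sup_{\tau \in \mathcal{T}_k} \mathbb{E}\, g(\tau, X_\tau)$. -/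
/-!
Write `Y m = g m ∘ X m`, `σ = τ_{n+1}` and `W = 𝔼[Y_σ | X_n]`. By the Markov property (extended
from bounded to integrable functions of the future by truncation), `W` is also `𝔼[Y_σ | ℱ_n]`.
Stop at `n` exactly where `W ≤ Y n`; this set is `{X_n ∈ B}`, so `f_n = 1_B`, and the
resulting rule earns `𝔼 max(Y n, W)`. Any `τ ∈ 𝒯_n` is compared with the time `ρ ∈ 𝒯_{n+1}`
equal to `σ` on `{τ = n}` and to `τ` elsewhere: `𝔼 Y_τ - 𝔼 Y_ρ = 𝔼[1_{τ = n} (Y n - W)]`,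
which is at most `𝔼 (max(Y n, W) - W) = 𝔼 max(Y n, W) - 𝔼 Y_σ`, while `𝔼 Y_ρ ≤ V_{n+1}`.
-/

open MeasureTheory Filter Set Topology

/-- The paper's formula `∑_{m=k}^N m a_m ∏_{j=k}^{m-1} (1 - a_j)`: for `0/1`-valued `a` with
`a N = 1` it is the first `m ≥ k` with `a m = 1`. -/
def stopIndex (a : ℕ → ℕ) (k N : ℕ) : ℕ :=
  ∑ m ∈ Finset.Icc k N, m * a m * ∏ j ∈ Finset.Ico k m, (1 - a j)

namespace stopIndex

variable {a b : ℕ → ℕ} {k m N : ℕ}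

theorem self : stopIndex a N N = N * a N := by
  simp [stopIndex]

theorem of_lt (hk : k < N) :
    stopIndex a k N = k * a k + (1 - a k) * stopIndex a (k + 1) N := by
  rw [stopIndex, ← Finset.insert_Icc_add_one_left_eq_Icc hk.le, Finset.sum_insert (by simp),
    stopIndex, Finset.mul_sum]
  congr 1
  · simp
  · refine Finset.sum_congr rfl fun m hm => ?_
    rw [← Finset.insert_Ico_add_one_left_eq_Ico (Finset.mem_Icc.mp hm).1,
      Finset.prod_insert (by simp)]
    ring

theorem congr (h : ∀ j ∈ Finset.Icc k N, a j = b j) : stopIndex a k N = stopIndex b k N := by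
  refine Finset.sum_congr rfl fun m hm => ?_
  rw [h m hm, Finset.prod_congr rfl fun j hj => by
    rw [h j (by simp only [Finset.mem_Icc, Finset.mem_Ico] at hm hj ⊢; omega)]]

theorem eq_ite_of_eqOn (hk : k < N) (hak : a k ≤ 1)
    (hab : ∀ j ∈ Finset.Icc (k + 1) N, a j = b j) :
    stopIndex a k N = if a k = 1 then k else stopIndex b (k + 1) N := by
  rw [of_lt hk, congr hab]
  rcases Nat.le_one_iff_eq_zero_or_eq_one.mp hak with h | h <;> simp [h]

theorem eq_of_isFirst (hkm : k ≤ m) (hmN : m ≤ N) (ham : a m = 1)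
    (hbefore : ∀ j ∈ Finset.Ico k m, a j = 0) : stopIndex a k N = m := by
  obtain ⟨d, rfl⟩ : ∃ d, m = k + d := ⟨m - k, by omega⟩
  induction d generalizing k with
  | zero =>
    simp only [add_zero] at hmN ham ⊢
    rcases hmN.lt_or_eq with hk | rfl
    · simp [of_lt hk, ham]
    · simp [self, ham]
  | succ d ih =>
    have hak : a k = 0 := hbefore k (by simp)
    rw [of_lt (by omega), hak, ih (by omega) (by omega) (by rwa [add_right_comm])
      fun j hj => hbefore j (by simp only [Finset.mem_Ico] at hj ⊢; omega)]
    ring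

theorem spec (ha : ∀ j, a j ≤ 1) (haN : a N = 1) (hk : k ≤ N) :
    stopIndex a k N ∈ Finset.Icc k N ∧ a (stopIndex a k N) = 1 ∧
      ∀ j ∈ Finset.Ico k (stopIndex a k N), a j = 0 := by
  have hex : ∃ i, k ≤ i ∧ a i = 1 := ⟨N, hk, haN⟩
  set i := Nat.find hex
  obtain ⟨hki, hai⟩ := Nat.find_spec hex
  have hiN : i ≤ N := Nat.find_min' hex ⟨hk, haN⟩
  have hbefore : ∀ j ∈ Finset.Ico k i, a j = 0 := fun j hj => by
    have := Nat.find_min hex (Finset.mem_Ico.mp hj).2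
    have := ha j
    rw [Finset.mem_Ico] at hj
    omega
  rw [eq_of_isFirst hki hiN hai hbefore]
  exact ⟨Finset.mem_Icc.mpr ⟨hki, hiN⟩, hai, hbefore⟩

theorem eq_iff (ha : ∀ j, a j ≤ 1) (haN : a N = 1) (hk : k ≤ N) {i : ℕ} :
    stopIndex a k N = i ↔ i ∈ Finset.Icc k N ∧ a i = 1 ∧ ∀ j ∈ Finset.Ico k i, a j = 0 := by
  constructor
  · rintro rfl
    exact spec ha haN hk
  · rintro ⟨hi, hai, hbefore⟩
    rw [Finset.mem_Icc] at hi
    exact eq_of_isFirst hi.1 hi.2 hai hbefore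

end stopIndex

theorem measurable_stopIndex {β : Type*} [MeasurableSpace β] {a : ℕ → β → ℕ}
    (ha : ∀ m, Measurable (a m)) (k N : ℕ) :
    Measurable fun y => stopIndex (fun m => a m y) k N := by
  unfold stopIndex
  fun_prop

theorem measurable_comp_index {α β : Type*} [MeasurableSpace α] [MeasurableSpace β]
    {Y : ℕ → α → β} (hY : ∀ m, Measurable (Y m)) {τ : α → ℕ} (hτ : Measurable τ) :
    Measurable fun x => Y (τ x) x :=
  (measurable_from_prod_countable_left (f := fun p : α × ℕ => Y p.2 p.1) hY).comp
    (measurable_id.prodMk hτ)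

theorem exists_measurable_comp_shift_eq {Ω E : Type*} [MeasurableSpace E] (X : ℕ → Ω → E)
    {g : ℕ → E → ℝ} (hg : ∀ m, Measurable (g m)) {f : ℕ → E → ℕ} (hf : ∀ m, Measurable (f m))
    (hf01 : ∀ m x, f m x ≤ 1) {k N : ℕ} (hfN : ∀ x, f N x = 1) (hk : k ≤ N) :
    ∃ H : (ℕ → E) → ℝ, Measurable H ∧ ∀ ω, H (fun m => X (k + m) ω) =
      g (stopIndex (fun m => f m (X m ω)) k N) (X (stopIndex (fun m => f m (X m ω)) k N) ω) := by
  set s : (ℕ → E) → ℕ := fun y => stopIndex (fun m => f m (y (m - k))) k N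
  refine ⟨fun y => g (s y) (y (s y - k)),
    measurable_comp_index (Y := fun m (y : ℕ → E) => g m (y (m - k)))
      (fun m => (hg m).comp (measurable_pi_apply _))
      (measurable_stopIndex (a := fun m (y : ℕ → E) => f m (y (m - k)))
        (fun m => (hf m).comp (measurable_pi_apply _)) _ _), fun ω => ?_⟩
  have hs : s (fun m => X (k + m) ω) = stopIndex (fun m => f m (X m ω)) k N :=
    stopIndex.congr fun j hj => by
      simp only [Finset.mem_Icc] at hj
      simp only [Nat.add_sub_cancel' hj.1]
  have hkσ := Finset.mem_Icc.mp (stopIndex.spec (fun j => hf01 j (X j ω)) (hfN _) hk).1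
  simp only [hs, Nat.add_sub_cancel' hkσ.1]

theorem exists_stopIndex_update_eq_ite {Ω E : Type*} [MeasurableSpace E] {X : ℕ → Ω → E}
    {n N : ℕ} (hn : n < N) (f : ℕ → E → ℕ) {D : Set Ω} [DecidablePred (· ∈ D)]
    (hD : MeasurableSet[MeasurableSpace.comap (X n) inferInstance] D) :
    ∃ fn : E → ℕ, Measurable fn ∧ (∀ x, fn x ≤ 1) ∧ ∀ ω,
      stopIndex (fun m => (if m = n then fn else f m) (X m ω)) n N =
        if ω ∈ D then n else stopIndex (fun m => f m (X m ω)) (n + 1) N := by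
  obtain ⟨B, hB, hBD⟩ := hD
  refine ⟨B.indicator 1, measurable_const.indicator hB, fun x => ?_, fun ω => ?_⟩
  · by_cases hx : x ∈ B <;> simp [hx]
  have hmem : X n ω ∈ B ↔ ω ∈ D := Set.ext_iff.mp hBD ω
  rw [stopIndex.eq_ite_of_eqOn (b := fun m => f m (X m ω)) hn
    (by by_cases hx : X n ω ∈ B <;> simp [hx])
    fun j hj => by rw [Finset.mem_Icc] at hj; rw [if_neg (by omega)]]
  by_cases hx : X n ω ∈ B <;> simp [hx, ← hmem]

section

variable {Ω : Type*} {m0 : MeasurableSpace Ω} {μ : Measure Ω}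

theorem isStoppingTime_stopIndex {F : Filtration ℕ m0} {a : ℕ → Ω → ℕ}
    (ha : ∀ m, Measurable[F m] (a m)) (ha1 : ∀ m ω, a m ω ≤ 1) {N : ℕ} (haN : ∀ ω, a N ω = 1)
    {k : ℕ} (hk : k ≤ N) :
    IsStoppingTime F fun ω => (stopIndex (fun m => a m ω) k N : WithTop ℕ) := by
  refine isStoppingTime_of_measurableSet_eq fun i => ?_
  suffices MeasurableSet[F i] {ω | stopIndex (fun m => a m ω) k N = i} by simpa using this
  have hset : {ω | stopIndex (fun m => a m ω) k N = i} =
      {_ω | i ∈ Finset.Icc k N} ∩ (a i ⁻¹' {1} ∩ ⋂ j ∈ Finset.Ico k i, a j ⁻¹' {0}) := by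
    ext ω
    simp [stopIndex.eq_iff (fun j => ha1 j ω) (haN ω) hk, -Finset.mem_Icc]
  rw [hset]
  refine (MeasurableSet.const _).inter ((ha i (measurableSet_singleton 1)).inter
    (Finset.measurableSet_biInter _ fun j hj => F.mono ?_ _ (ha j (measurableSet_singleton 0))))
  exact (Finset.mem_Ico.mp hj).2.le

theorem measurableSet_eq_of_isStoppingTime {F : Filtration ℕ m0} {τ : Ω → ℕ}
    (hτ : IsStoppingTime F fun ω => (τ ω : WithTop ℕ)) (i : ℕ) :
    MeasurableSet[F i] {ω | τ ω = i} := by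
  simpa using hτ.measurableSet_eq i

theorem measurable_of_isStoppingTime {F : Filtration ℕ m0} {τ : Ω → ℕ}
    (hτ : IsStoppingTime F fun ω => (τ ω : WithTop ℕ)) : Measurable τ :=
  measurable_to_countable' fun i => F.le i _ (measurableSet_eq_of_isStoppingTime hτ i)

noncomputable def optimalValue (μ : Measure Ω) (F : Filtration ℕ m0) (Y : ℕ → Ω → ℝ) (k N : ℕ) :
    ℝ :=
  sSup ((fun τ : Ω → ℕ => ∫ ω, Y (τ ω) ω ∂μ) ''
    {τ | IsStoppingTime F (fun ω => (τ ω : WithTop ℕ)) ∧ ∀ ω, τ ω ∈ Finset.Icc k N})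

section OptimalStopping

variable {Y : ℕ → Ω → ℝ} {N : ℕ}

theorem stopped_eq_sum_indicator {τ : Ω → ℕ} (hτN : ∀ ω, τ ω ≤ N) (ω : Ω) :
    Y (τ ω) ω = ∑ m ∈ Finset.range (N + 1), {ω | τ ω = m}.indicator (Y m) ω := by
  rw [Finset.sum_eq_single_of_mem (τ ω) (Finset.mem_range.mpr (Nat.lt_succ_of_le (hτN ω)))]
  · simp
  · intro m _ hm
    exact indicator_of_notMem (s := {ω | τ ω = m}) (Ne.symm hm) _

theorem integrable_stopped (hY : ∀ m ≤ N, Integrable (Y m) μ) {τ : Ω → ℕ} (hτ : Measurable τ)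
    (hτN : ∀ ω, τ ω ≤ N) : Integrable (fun ω => Y (τ ω) ω) μ := by
  simp_rw [stopped_eq_sum_indicator hτN]
  exact integrable_finsetSum _ fun m hm =>
    (hY m (Nat.lt_succ_iff.mp (Finset.mem_range.mp hm))).indicator (hτ (measurableSet_singleton m))

theorem integral_stopped_le (hY : ∀ m ≤ N, Integrable (Y m) μ) {τ : Ω → ℕ} (hτ : Measurable τ)
    (hτN : ∀ ω, τ ω ≤ N) :
    ∫ ω, Y (τ ω) ω ∂μ ≤ ∑ m ∈ Finset.range (N + 1), ∫ ω, |Y m ω| ∂μ := by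
  have hYabs : ∀ m ∈ Finset.range (N + 1), Integrable (fun ω => |Y m ω|) μ :=
    fun m hm => (hY m (Nat.lt_succ_iff.mp (Finset.mem_range.mp hm))).abs
  rw [← integral_finsetSum _ hYabs]
  refine integral_mono (integrable_stopped hY hτ hτN) (integrable_finsetSum _ hYabs) fun ω => ?_
  exact (le_abs_self _).trans (Finset.single_le_sum (f := fun m => |Y m ω|)
    (fun m _ => abs_nonneg _) (Finset.mem_range.mpr (Nat.lt_succ_of_le (hτN ω))))

theorem setIntegral_sub_setIntegral_le {a W : Ω → ℝ} (ha : Integrable a μ) (hW : Integrable W μ)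
    (A : Set Ω) :
    ∫ ω in A, a ω ∂μ - ∫ ω in A, W ω ∂μ ≤ ∫ ω, max (a ω) (W ω) ∂μ - ∫ ω, W ω ∂μ := by
  have hmax : Integrable (fun ω => max (a ω) (W ω)) μ := ha.sup hW
  calc ∫ ω in A, a ω ∂μ - ∫ ω in A, W ω ∂μ = ∫ ω in A, (a ω - W ω) ∂μ :=
        (integral_sub ha.integrableOn hW.integrableOn).symm
    _ ≤ ∫ ω in A, (max (a ω) (W ω) - W ω) ∂μ :=
        setIntegral_mono (ha.sub hW).integrableOn (hmax.sub hW).integrableOn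
          fun ω => sub_le_sub_right (le_max_left _ _) _
    _ ≤ ∫ ω, (max (a ω) (W ω) - W ω) ∂μ :=
        setIntegral_le_integral (hmax.sub hW)
          (ae_of_all _ fun ω => sub_nonneg.mpr (le_max_right _ _))
    _ = ∫ ω, max (a ω) (W ω) ∂μ - ∫ ω, W ω ∂μ := integral_sub hmax hW

variable {F : Filtration ℕ m0}

theorem integral_stopped_le_optimalValue (hY : ∀ m ≤ N, Integrable (Y m) μ) {k : ℕ} {τ : Ω → ℕ}
    (hτ : IsStoppingTime F fun ω => (τ ω : WithTop ℕ)) (hτk : ∀ ω, τ ω ∈ Finset.Icc k N) :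
    ∫ ω, Y (τ ω) ω ∂μ ≤ optimalValue μ F Y k N := by
  refine le_csSup ⟨∑ m ∈ Finset.range (N + 1), ∫ ω, |Y m ω| ∂μ, ?_⟩ ⟨τ, ⟨hτ, hτk⟩, rfl⟩
  rintro _ ⟨σ, ⟨hσ, hσk⟩, rfl⟩
  exact integral_stopped_le hY (measurable_of_isStoppingTime hσ)
    fun ω => (Finset.mem_Icc.mp (hσk ω)).2

theorem integral_stopped_ite_eq_integral_max (hY : ∀ m ≤ N, Integrable (Y m) μ) {n : ℕ}
    (hn : n ≤ N) {σ : Ω → ℕ} (hσ : Measurable σ) (hσN : ∀ ω, σ ω ≤ N) {W : Ω → ℝ}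
    (hW : Integrable W μ)
    (hσW : ∀ A, MeasurableSet[F n] A → ∫ ω in A, Y (σ ω) ω ∂μ = ∫ ω in A, W ω ∂μ)
    (hD : MeasurableSet[F n] {ω | W ω ≤ Y n ω}) :
    ∫ ω, Y (if W ω ≤ Y n ω then n else σ ω) ω ∂μ = ∫ ω, max (Y n ω) (W ω) ∂μ := by
  set D := {ω | W ω ≤ Y n ω}
  have hD0 : MeasurableSet D := F.le n _ hD
  have hint : Integrable (fun ω => Y (if W ω ≤ Y n ω then n else σ ω) ω) μ :=
    integrable_stopped hY (Measurable.ite hD0 measurable_const hσ) fun ω => by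
      split_ifs
      exacts [hn, hσN ω]
  have hmax : Integrable (fun ω => max (Y n ω) (W ω)) μ := (hY n hn).sup hW
  rw [← integral_add_compl hD0 hint, ← integral_add_compl hD0 hmax]
  congr 1
  · refine setIntegral_congr_fun hD0 fun ω (hω : W ω ≤ Y n ω) => ?_
    simp [hω]
  · calc ∫ ω in Dᶜ, Y (if W ω ≤ Y n ω then n else σ ω) ω ∂μ
        = ∫ ω in Dᶜ, Y (σ ω) ω ∂μ :=
          setIntegral_congr_fun hD0.compl fun ω (hω : ¬ W ω ≤ Y n ω) => by simp [hω]
      _ = ∫ ω in Dᶜ, W ω ∂μ := hσW _ hD.compl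
      _ = ∫ ω in Dᶜ, max (Y n ω) (W ω) ∂μ :=
          setIntegral_congr_fun hD0.compl fun ω (hω : ¬ W ω ≤ Y n ω) =>
            (max_eq_right (not_le.mp hω).le).symm

theorem isStoppingTime_ite_eq {n : ℕ} {τ σ : Ω → ℕ}
    (hτ : IsStoppingTime F fun ω => (τ ω : WithTop ℕ))
    (hσ : IsStoppingTime F fun ω => (σ ω : WithTop ℕ)) (hτn : ∀ ω, n ≤ τ ω) (hσn : ∀ ω, n ≤ σ ω) :
    IsStoppingTime F fun ω => ((if τ ω = n then σ ω else τ ω : ℕ) : WithTop ℕ) := by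
  have := hσ.piecewise_of_le hτ (i := n) (fun ω => by simpa using hσn ω)
    (fun ω => by simpa using hτn ω) (measurableSet_eq_of_isStoppingTime hτ n)
  convert this using 1
  funext ω
  by_cases h : τ ω = n <;> simp [Set.piecewise, h]

theorem optimalValue_le_optimalValue_succ_add (hY : ∀ m ≤ N, Integrable (Y m) μ) {n : ℕ}
    (hn : n < N) {σ : Ω → ℕ} (hσ : IsStoppingTime F fun ω => (σ ω : WithTop ℕ))
    (hσI : ∀ ω, σ ω ∈ Finset.Icc (n + 1) N) {W : Ω → ℝ} (hW : Integrable W μ)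
    (hσW : ∀ A, MeasurableSet[F n] A → ∫ ω in A, Y (σ ω) ω ∂μ = ∫ ω in A, W ω ∂μ) :
    optimalValue μ F Y n N ≤
      optimalValue μ F Y (n + 1) N + (∫ ω, max (Y n ω) (W ω) ∂μ - ∫ ω, Y (σ ω) ω ∂μ) := by
  refine csSup_le ⟨_, fun _ => N,
    ⟨isStoppingTime_const F N, fun _ => Finset.mem_Icc.mpr ⟨hn.le, le_rfl⟩⟩, rfl⟩ ?_
  rintro _ ⟨τ, ⟨hτ, hτI⟩, rfl⟩
  set A := {ω | τ ω = n}
  have hAF : MeasurableSet[F n] A := measurableSet_eq_of_isStoppingTime hτ n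
  have hA : MeasurableSet A := F.le n _ hAF
  set ρ : Ω → ℕ := fun ω => if τ ω = n then σ ω else τ ω
  have hρ : IsStoppingTime F fun ω => (ρ ω : WithTop ℕ) :=
    isStoppingTime_ite_eq hτ hσ (fun ω => (Finset.mem_Icc.mp (hτI ω)).1)
      fun ω => (Nat.le_succ n).trans (Finset.mem_Icc.mp (hσI ω)).1
  have hρI : ∀ ω, ρ ω ∈ Finset.Icc (n + 1) N := fun ω => by
    have := Finset.mem_Icc.mp (hτI ω)
    have := Finset.mem_Icc.mp (hσI ω)
    by_cases h : τ ω = n <;> simp only [ρ, h, if_true, if_false, Finset.mem_Icc] <;> omega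
  have hτsplit : ∫ ω, Y (τ ω) ω ∂μ = ∫ ω in A, Y n ω ∂μ + ∫ ω in Aᶜ, Y (τ ω) ω ∂μ := by
    rw [← integral_add_compl hA (integrable_stopped hY (measurable_of_isStoppingTime hτ)
      fun ω => (Finset.mem_Icc.mp (hτI ω)).2)]
    congr 1
    exact setIntegral_congr_fun hA fun ω (hω : τ ω = n) => by rw [hω]
  have hρsplit : ∫ ω, Y (ρ ω) ω ∂μ = ∫ ω in A, W ω ∂μ + ∫ ω in Aᶜ, Y (τ ω) ω ∂μ := by
    rw [← integral_add_compl hA (integrable_stopped hY (measurable_of_isStoppingTime hρ)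
      fun ω => (Finset.mem_Icc.mp (hρI ω)).2), ← hσW A hAF]
    congr 1
    · exact setIntegral_congr_fun hA fun ω (hω : τ ω = n) => by simp [ρ, hω]
    · exact setIntegral_congr_fun hA.compl fun ω (hω : τ ω ≠ n) => by simp [ρ, hω]
  have hσW_univ : ∫ ω, Y (σ ω) ω ∂μ = ∫ ω, W ω ∂μ := by
    simpa only [setIntegral_univ] using hσW univ MeasurableSet.univ
  linarith [integral_stopped_le_optimalValue hY hρ hρI,
    setIntegral_sub_setIntegral_le (hY n hn.le) hW A]

end OptimalStopping

section Truncation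

open ProbabilityTheory

theorem abs_sub_truncation_le (f : Ω → ℝ) (A : ℝ) (ω : Ω) :
    |f ω - truncation f A ω| ≤ |f ω| := by
  simp only [truncation, indicator, Function.comp_apply, id]
  split_ifs <;> simp

theorem tendsto_integral_abs_sub_truncation {f : Ω → ℝ} (hf : Integrable f μ) :
    Tendsto (fun k : ℕ => ∫ ω, |f ω - truncation f k ω| ∂μ) atTop (𝓝 0) := by
  have hlim := tendsto_integral_of_dominated_convergence (μ := μ)
    (F := fun k : ℕ => fun ω => |f ω - truncation f k ω|) (f := fun _ => 0) (fun ω => |f ω|)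
    (fun k => (hf.1.sub hf.1.truncation).norm) hf.abs
    (fun k => ae_of_all _ fun ω => by simpa using abs_sub_truncation_le f k ω)
    (ae_of_all _ fun ω => tendsto_const_nhds.congr' <| by
      filter_upwards [eventually_gt_atTop ⌈|f ω|⌉₊] with k hk
      rw [truncation_eq_self (Nat.lt_of_ceil_lt hk), sub_self, abs_zero])
  simpa using hlim

theorem integral_abs_condExp_sub_condExp_le {m₁ m₂ : MeasurableSpace Ω} {f g : Ω → ℝ}
    (hf : Integrable f μ) (hg : Integrable g μ) (hfg : μ[g | m₁] =ᵐ[μ] μ[g | m₂]) :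
    ∫ ω, |μ[f | m₁] ω - μ[f | m₂] ω| ∂μ ≤ 2 * ∫ ω, |f ω - g ω| ∂μ := by
  have hsub : μ[f | m₁] - μ[f | m₂] =ᵐ[μ] μ[f - g | m₁] - μ[f - g | m₂] := by
    filter_upwards [condExp_sub hf hg m₁, condExp_sub hf hg m₂, hfg] with ω h₁ h₂ h
    simp only [Pi.sub_apply] at h₁ h₂ ⊢
    rw [h₁, h₂, h]
    ring
  calc ∫ ω, |μ[f | m₁] ω - μ[f | m₂] ω| ∂μ
      = ∫ ω, |μ[f - g | m₁] ω - μ[f - g | m₂] ω| ∂μ :=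
        integral_congr_ae (hsub.fun_comp abs)
    _ ≤ ∫ ω, (|μ[f - g | m₁] ω| + |μ[f - g | m₂] ω|) ∂μ :=
        integral_mono (integrable_condExp.sub integrable_condExp).abs
          (integrable_condExp.abs.add integrable_condExp.abs) fun ω => abs_sub _ _
    _ ≤ ∫ ω, |f ω - g ω| ∂μ + ∫ ω, |f ω - g ω| ∂μ := by
        rw [integral_add integrable_condExp.abs integrable_condExp.abs]
        exact add_le_add (integral_abs_condExp_le _) (integral_abs_condExp_le _)
    _ = 2 * ∫ ω, |f ω - g ω| ∂μ := by ring

theorem condExp_comp_ae_eq_of_bounded {β : Type*} [MeasurableSpace β]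
    {m₁ m₂ : MeasurableSpace Ω} {Z : Ω → β}
    (hZ : ∀ h : β → ℝ, Measurable h → (∃ C, ∀ y, |h y| ≤ C) →
      μ[fun ω => h (Z ω) | m₁] =ᵐ[μ] μ[fun ω => h (Z ω) | m₂])
    {H : β → ℝ} (hH : Measurable H) (hHZ : Integrable (fun ω => H (Z ω)) μ) :
    μ[fun ω => H (Z ω) | m₁] =ᵐ[μ] μ[fun ω => H (Z ω) | m₂] := by
  set f := fun ω => H (Z ω)
  have hbound : ∀ k : ℕ, ∫ ω, |μ[f | m₁] ω - μ[f | m₂] ω| ∂μ ≤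
      2 * ∫ ω, |f ω - truncation f k ω| ∂μ := fun k =>
    integral_abs_condExp_sub_condExp_le hHZ
      (hHZ.mono hHZ.1.truncation (ae_of_all _ fun ω => by
        simpa only [Real.norm_eq_abs] using abs_truncation_le_abs_self f k ω))
      (hZ (truncation H k) ((measurable_id.indicator measurableSet_Ioc).comp hH)
        ⟨|(k : ℝ)|, abs_truncation_le_bound H k⟩)
  have hzero : ∫ ω, |μ[f | m₁] ω - μ[f | m₂] ω| ∂μ = 0 :=
    le_antisymm
      (ge_of_tendsto (by simpa using (tendsto_integral_abs_sub_truncation hHZ).const_mul 2)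
        (Eventually.of_forall hbound))
      (integral_nonneg fun ω => abs_nonneg _)
  have hint : Integrable (fun ω => |μ[f | m₁] ω - μ[f | m₂] ω|) μ :=
    (integrable_condExp.sub integrable_condExp).abs
  rw [integral_eq_zero_iff_of_nonneg (fun ω => abs_nonneg _) hint] at hzero
  filter_upwards [hzero] with ω hω
  simpa [sub_eq_zero] using hω

end Truncation

theorem setIntegral_eq_of_condExp_ae_eq {m : MeasurableSpace Ω} (hm : m ≤ m0)
    [SigmaFinite (μ.trim hm)] {f W : Ω → ℝ} (hf : Integrable f μ) (hfW : μ[f | m] =ᵐ[μ] W)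
    {A : Set Ω} (hA : MeasurableSet[m] A) : ∫ ω in A, f ω ∂μ = ∫ ω in A, W ω ∂μ := by
  rw [← setIntegral_condExp hm hf hA]
  exact setIntegral_congr_ae (hm _ hA) (hfW.mono fun ω h _ => h)

end

theorem stmt2
    {Ω : Type*} {m0 : MeasurableSpace Ω} (μ : Measure Ω) [IsProbabilityMeasure μ]
    (d N n : ℕ) (hn : n < N)
    (X : ℕ → Ω → (Fin d → ℝ)) (hX : ∀ m, StronglyMeasurable (X m))
    -- the Markov property: conditioning functions of the future on the past
    -- is the same as conditioning on the present state
    (hMarkov : ∀ (k : ℕ) (h : (ℕ → (Fin d → ℝ)) → ℝ), Measurable h →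
      (∃ C, ∀ y, |h y| ≤ C) →
      μ[(fun ω => h (fun m => X (k + 1 + m) ω)) | (MeasureTheory.Filtration.natural X hX) k]
        =ᵐ[μ] μ[(fun ω => h (fun m => X (k + 1 + m) ω)) | MeasurableSpace.comap (X k) inferInstance])
    (g : ℕ → (Fin d → ℝ) → ℝ) (hg : ∀ m, Measurable (g m))
    (hgint : ∀ m, m ≤ N → Integrable (fun ω => g m (X m ω)) μ)
    (f : ℕ → (Fin d → ℝ) → ℕ) (hf : ∀ m, Measurable (f m))
    (hf01 : ∀ m x, f m x ≤ 1) (hfN : ∀ x, f N x = 1)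
    -- the optimal values V_k over stopping times valued in {k,...,N}
    (V : ℕ → ℝ)
    (hV : ∀ k, V k = sSup ((fun τ : Ω → ℕ => ∫ ω, g (τ ω) (X (τ ω) ω) ∂μ) ''
      {τ | IsStoppingTime (MeasureTheory.Filtration.natural X hX) (fun ω => (τ ω : WithTop ℕ)) ∧
        ∀ ω, τ ω ∈ Finset.Icc k N})) :
    ∃ fn : (Fin d → ℝ) → ℕ, Measurable fn ∧ (∀ x, fn x ≤ 1) ∧
      ∫ ω, g ((fun ω => ∑ m ∈ Finset.Icc n N,
            m * (if m = n then fn else f m) (X m ω) *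
              ∏ j ∈ Finset.Ico n m, (1 - (if j = n then fn else f j) (X j ω))) ω)
          (X ((fun ω => ∑ m ∈ Finset.Icc n N,
            m * (if m = n then fn else f m) (X m ω) *
              ∏ j ∈ Finset.Ico n m, (1 - (if j = n then fn else f j) (X j ω))) ω) ω) ∂μ
        ≥ V n - (V (n + 1) -
            ∫ ω, g ((fun ω => ∑ m ∈ Finset.Icc (n + 1) N,
                m * f m (X m ω) * ∏ j ∈ Finset.Ico (n + 1) m, (1 - f j (X j ω))) ω)
              (X ((fun ω => ∑ m ∈ Finset.Icc (n + 1) N,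
                m * f m (X m ω) * ∏ j ∈ Finset.Ico (n + 1) m, (1 - f j (X j ω))) ω) ω) ∂μ) := by
  set F := Filtration.natural X hX
  set Y : ℕ → Ω → ℝ := fun m ω => g m (X m ω)
  have hXF : ∀ m, Measurable[F m] (X m) := fun m =>
    (Filtration.stronglyAdapted_natural hX m).measurable
  set σ : Ω → ℕ := fun ω => stopIndex (fun m => f m (X m ω)) (n + 1) N
  have hσ : IsStoppingTime F fun ω => (σ ω : WithTop ℕ) :=
    isStoppingTime_stopIndex (fun m => (hf m).comp (hXF m)) (fun m _ => hf01 m _)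
      (fun _ => hfN _) hn
  have hσI : ∀ ω, σ ω ∈ Finset.Icc (n + 1) N := fun ω =>
    (stopIndex.spec (fun j => hf01 j _) (hfN _) hn).1
  have hG : Integrable (fun ω => Y (σ ω) ω) μ :=
    integrable_stopped hgint (measurable_of_isStoppingTime hσ)
      fun ω => (Finset.mem_Icc.mp (hσI ω)).2
  set W := μ[fun ω => Y (σ ω) ω | MeasurableSpace.comap (X n) inferInstance]
  have hσW : ∀ A, MeasurableSet[F n] A → ∫ ω in A, Y (σ ω) ω ∂μ = ∫ ω in A, W ω ∂μ := by
    obtain ⟨H, hH, hHσ⟩ := exists_measurable_comp_shift_eq X hg hf hf01 hfN hn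
    have hcond := condExp_comp_ae_eq_of_bounded (hMarkov n) hH (by simpa only [hHσ] using hG)
    simp only [hHσ] at hcond
    exact fun A hA => setIntegral_eq_of_condExp_ae_eq (F.le n) hG hcond hA
  have hD : MeasurableSet[MeasurableSpace.comap (X n) inferInstance] {ω | W ω ≤ Y n ω} :=
    measurableSet_le stronglyMeasurable_condExp.measurable ((hg n).comp (comap_measurable (X n)))
  obtain ⟨fn, hfn, hfn1, hτ⟩ := exists_stopIndex_update_eq_ite hn f hD
  refine ⟨fn, hfn, hfn1, ?_⟩
  show ∫ ω, Y (stopIndex (fun m => (if m = n then fn else f m) (X m ω)) n N) ω ∂μ ≥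
    V n - (V (n + 1) - ∫ ω, Y (σ ω) ω ∂μ)
  have hVF : ∀ k, V k = optimalValue μ F Y k N := hV
  simp_rw [hτ, mem_ofPred_eq, hVF]
  rw [integral_stopped_ite_eq_integral_max hgint hn.le (measurable_of_isStoppingTime hσ)
    (fun ω => (Finset.mem_Icc.mp (hσI ω)).2) integrable_condExp hσW ((hXF n).comap_le _ hD)]
  linarith [optimalValue_le_optimalValue_succ_add hgint hn hσ hσI integrable_condExp hσW]
end

section
/- Let $X=(X_n)_{n=0}^N$ be an $\mathbb{R}^d$-valued Markov process with $\mathbb{E}|g(m,X_m)| < \infty$ for all $m$, where $g$ is measurable. Then there exist measurable functions $f_0, f_1, \dots, f_N : \mathbb{R}^d \to \{0,1\}$ with $f_N \equiv 1$ such that the stopping time $\tau = \sum_{n=0}^N n f_n(X_n) \prod_{j=0}^{n-1}(1-f_j(X_j))$ satisfies $\mathbb{E}\, g(\tau, X_\tau) = \sup_{\sigma \in \mathcal{T}} \mathbb{E}\, g(\sigma, X_\sigma)$, where $\mathcal{T}$ is the set of all stopping times with respect to the filtration generated by $X$. -/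
/-!
Put `v N = g N` and `v k = max (g k) (P k (v (k + 1)))`, where `P k h (X k)` is a version of
`E[h (X (k + 1)) | X k]`. The Markov property, extended from bounded to integrable functions by
truncation, identifies `E[U (k + 1) | F k]` with `P k (v (k + 1)) (X k)` for `U k = v k (X k)`.
Hence `U` is a supermartingale dominating the reward `g k (X k)`, and optional stopping bounds
`E g(σ, X σ)` by `E U 0` for every stopping time `σ ≤ N`. The rule `f k = 1{v k ≤ g k}` stops
exactly when `U k = g k (X k)`, and before that `U k = E[U (k + 1) | F k]`, so backward induction
gives `E g(τ, X τ) = E U 0`.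
-/

open MeasureTheory Filter Set
open scoped Topology

-- For a `{0, 1}`-valued `b` with `b N = 1`, this is the first `n ≥ k` with `b n = 1`.
def ruleTime (b : ℕ → ℕ) (N k : ℕ) : ℕ :=
  ∑ m ∈ Finset.Icc k N, m * b m * ∏ j ∈ Finset.Ico k m, (1 - b j)

section ruleTime

variable {b : ℕ → ℕ} {N k : ℕ}

lemma ruleTime_self (hN : b N = 1) : ruleTime b N N = N := by
  simp [ruleTime, hN]

lemma ruleTime_of_lt (hb : b k ≤ 1) (hk : k < N) :
    ruleTime b N k = if b k = 1 then k else ruleTime b N (k + 1) := by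
  have hsplit : ruleTime b N k = k * b k + (1 - b k) * ruleTime b N (k + 1) := by
    rw [ruleTime, ← Finset.insert_Icc_add_one_left_eq_Icc hk.le, Finset.sum_insert (by simp),
      ruleTime, Finset.mul_sum]
    congr 1
    · simp
    · refine Finset.sum_congr rfl fun m hm => ?_
      rw [Finset.prod_eq_prod_Ico_succ_bot (Finset.mem_Icc.1 hm).1]
      ring
  rcases Nat.le_one_iff_eq_zero_or_eq_one.mp hb with h | h <;> simp [hsplit, h]

lemma ruleTime_mem_Icc (hb : ∀ n, b n ≤ 1) (hN : b N = 1) (hk : k ≤ N) :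
    ruleTime b N k ∈ Set.Icc k N := by
  induction hk using Nat.decreasingInduction with
  | self => simp [ruleTime_self hN]
  | of_succ k hk ih =>
    rw [ruleTime_of_lt (hb k) hk]
    split_ifs
    · exact ⟨le_rfl, hk.le⟩
    · exact ⟨(Nat.le_succ k).trans ih.1, ih.2⟩

end ruleTime

section OptimalStopping

variable {Ω : Type*} {m0 : MeasurableSpace Ω} {μ : Measure Ω}
  {F : Filtration ℕ m0} {N : ℕ} {Y U : ℕ → Ω → ℝ}

lemma integrable_comp_of_isStoppingTime (hY : ∀ n ≤ N, Integrable (Y n) μ) {σ : Ω → ℕ}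
    (hσ : IsStoppingTime F (fun ω => (σ ω : WithTop ℕ))) (hσN : ∀ ω, σ ω ≤ N) :
    Integrable (fun ω => Y (σ ω) ω) μ := by
  have := integrable_stoppedValue ℕ hσ (u := fun n => Y (min n N))
    (fun n => hY _ (min_le_right _ _)) (N := N) (fun ω => WithTop.coe_le_coe.2 (hσN ω))
  refine this.congr (ae_of_all _ fun ω => ?_)
  change Y (min (σ ω) N) ω = Y (σ ω) ω
  rw [min_eq_left (hσN ω)]

lemma supermartingale_min_horizon [IsFiniteMeasure μ]
    (hUF : ∀ n ≤ N, StronglyMeasurable[F n] (U n))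
    (hU : ∀ n ≤ N, Integrable (U n) μ) (hsuper : ∀ n < N, μ[U (n + 1) | F n] ≤ᵐ[μ] U n) :
    Supermartingale (fun n => U (min n N)) F μ := by
  refine supermartingale_nat
    (fun n => (hUF _ (min_le_right _ _)).mono (F.mono (min_le_left _ _)))
    (fun n => hU _ (min_le_right _ _)) fun n => ?_
  rcases lt_or_ge n N with h | h
  · simpa [min_eq_left h.le, min_eq_left (Nat.succ_le_of_lt h)] using hsuper n h
  · rw [min_eq_right h, min_eq_right (by omega),
      condExp_of_stronglyMeasurable (F.le n) ((hUF N le_rfl).mono (F.mono h)) (hU N le_rfl)]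

lemma integral_comp_le_of_supermartingale [IsFiniteMeasure μ] (hU : Supermartingale U F μ)
    (hY : ∀ n ≤ N, Integrable (Y n) μ) (hYU : ∀ n ≤ N, Y n ≤ U n) {σ : Ω → ℕ}
    (hσ : IsStoppingTime F (fun ω => (σ ω : WithTop ℕ))) (hσN : ∀ ω, σ ω ≤ N) :
    ∫ ω, Y (σ ω) ω ∂μ ≤ ∫ ω, U 0 ω ∂μ := calc
  ∫ ω, Y (σ ω) ω ∂μ ≤ ∫ ω, U (σ ω) ω ∂μ :=
    integral_mono (integrable_comp_of_isStoppingTime hY hσ hσN)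
      (integrable_comp_of_isStoppingTime (fun n _ => hU.integrable n) hσ hσN)
      fun ω => hYU _ (hσN ω) ω
  _ ≤ ∫ ω, U 0 ω ∂μ := by
    have := hU.neg.expected_stoppedValue_mono (isStoppingTime_const F 0) hσ
      (fun ω => WithTop.coe_le_coe.2 (Nat.zero_le _)) (fun ω => WithTop.coe_le_coe.2 (hσN ω))
    simp only [stoppedValue, Pi.neg_apply, integral_neg, neg_le_neg_iff] at this
    exact this

variable {b : ℕ → Ω → ℕ}

lemma isStoppingTime_ruleTime (hb : ∀ n ω, b n ω ≤ 1) (hN : ∀ ω, b N ω = 1)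
    (hbF : ∀ n, MeasurableSet[F n] {ω | b n ω = 1}) {k : ℕ} (hk : k ≤ N) :
    IsStoppingTime F (fun ω => (ruleTime (b · ω) N k : WithTop ℕ)) := by
  induction hk using Nat.decreasingInduction with
  | self =>
    convert isStoppingTime_const F N using 2 with ω
    rw [ruleTime_self (hN ω)]
    rfl
  | of_succ k hk ih =>
    have hpw : (fun ω => (ruleTime (b · ω) N k : WithTop ℕ)) = {ω | b k ω = 1}.piecewise
        (fun _ => (k : WithTop ℕ)) (fun ω => (ruleTime (b · ω) N (k + 1) : WithTop ℕ)) := by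
      ext ω
      simp only [ruleTime_of_lt (b := (b · ω)) (hb k ω) hk, Set.piecewise, Set.mem_ofPred_eq]
      split_ifs <;> rfl
    rw [hpw]
    refine (isStoppingTime_const F k).piecewise_of_le ih (fun _ => le_rfl) (fun ω => ?_) (hbF k)
    exact WithTop.coe_le_coe.2 <| (Nat.le_succ k).trans
      (ruleTime_mem_Icc (hb · ω) (hN ω) (Nat.succ_le_of_lt hk)).1

lemma setIntegral_comp_ruleTime [IsFiniteMeasure μ] (hb : ∀ n ω, b n ω ≤ 1)
    (hN : ∀ ω, b N ω = 1) (hbF : ∀ n, MeasurableSet[F n] {ω | b n ω = 1})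
    (hY : ∀ n ≤ N, Integrable (Y n) μ) (hU : ∀ n ≤ N, Integrable (U n) μ)
    (hstop : ∀ n ≤ N, ∀ ω, b n ω = 1 → Y n ω = U n ω)
    (hcont : ∀ n < N, ∀ᵐ ω ∂μ, b n ω ≠ 1 → U n ω = μ[U (n + 1) | F n] ω)
    {k : ℕ} (hk : k ≤ N) {A : Set Ω} (hA : MeasurableSet[F k] A) :
    ∫ ω in A, Y (ruleTime (b · ω) N k) ω ∂μ = ∫ ω in A, U k ω ∂μ := by
  induction hk using Nat.decreasingInduction generalizing A with
  | self =>
    refine setIntegral_congr_fun (F.le N _ hA) fun ω _ => ?_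
    rw [ruleTime_self (b := (b · ω)) (hN ω)]
    exact hstop N le_rfl ω (hN ω)
  | of_succ k hk ih =>
    set S := {ω | b k ω = 1}
    have hτ := fun ω => ruleTime_of_lt (b := (b · ω)) (hb k ω) hk
    have hYτ : Integrable (fun ω => Y (ruleTime (b · ω) N k) ω) μ :=
      integrable_comp_of_isStoppingTime hY (isStoppingTime_ruleTime hb hN hbF hk.le)
        fun ω => (ruleTime_mem_Icc (hb · ω) (hN ω) hk.le).2
    have on_stop : ∫ ω in A ∩ S, Y (ruleTime (b · ω) N k) ω ∂μ = ∫ ω in A ∩ S, U k ω ∂μ :=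
      setIntegral_congr_fun (F.le k _ (hA.inter (hbF k))) fun ω hω => by
        have hstopped : b k ω = 1 := hω.2
        rw [hτ, if_pos hstopped]
        exact hstop k hk.le ω hstopped
    have on_cont : ∫ ω in A \ S, Y (ruleTime (b · ω) N k) ω ∂μ = ∫ ω in A \ S, U k ω ∂μ := calc
      _ = ∫ ω in A \ S, Y (ruleTime (b · ω) N (k + 1)) ω ∂μ :=
        setIntegral_congr_fun (F.le k _ (hA.diff (hbF k))) fun ω hω => by
          rw [hτ, if_neg (show b k ω ≠ 1 from hω.2)]
      _ = ∫ ω in A \ S, U (k + 1) ω ∂μ := ih (F.mono k.le_succ _ (hA.diff (hbF k)))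
      _ = ∫ ω in A \ S, μ[U (k + 1) | F k] ω ∂μ :=
        (setIntegral_condExp (F.le k) (hU _ hk) (hA.diff (hbF k))).symm
      _ = ∫ ω in A \ S, U k ω ∂μ := by
        refine setIntegral_congr_ae (F.le k _ (hA.diff (hbF k))) ?_
        filter_upwards [hcont k hk] with ω h hω using (h hω.2).symm
    rw [← integral_inter_add_sdiff (F.le k _ (hbF k)) hYτ.integrableOn,
      ← integral_inter_add_sdiff (F.le k _ (hbF k)) (hU k hk.le).integrableOn, on_stop, on_cont]

end OptimalStopping

theorem condExp_ae_eq_condExp_of_tendsto {α E : Type*} [NormedAddCommGroup E] [NormedSpace ℝ E]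
    [CompleteSpace E] {m₁ m₂ m₀ : MeasurableSpace α} {μ : Measure α} (h₁ : m₁ ≤ m₀)
    (h₂ : m₂ ≤ m₀) [SigmaFinite (μ.trim h₁)] [SigmaFinite (μ.trim h₂)] {fs : ℕ → α → E}
    {f : α → E} (bound : α → ℝ) (hfs_meas : ∀ n, AEStronglyMeasurable (fs n) μ)
    (h_int_bound : Integrable bound μ) (hfs_bound : ∀ n, ∀ᵐ x ∂μ, ‖fs n x‖ ≤ bound x)
    (hfs : ∀ᵐ x ∂μ, Tendsto (fun n => fs n x) atTop (𝓝 (f x)))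
    (hfs_eq : ∀ n, μ[fs n | m₁] =ᵐ[μ] μ[fs n | m₂]) :
    μ[f | m₁] =ᵐ[μ] μ[f | m₂] := by
  have hL1 : condExpL1 h₁ μ f = condExpL1 h₂ μ f :=
    tendsto_nhds_unique_of_eventuallyEq
      (tendsto_condExpL1_of_dominated_convergence h₁ bound hfs_meas h_int_bound hfs_bound hfs)
      (tendsto_condExpL1_of_dominated_convergence h₂ bound hfs_meas h_int_bound hfs_bound hfs)
      (Eventually.of_forall fun n => Lp.ext <| (condExp_ae_eq_condExpL1 h₁ _).symm.trans <|
        (hfs_eq n).trans (condExp_ae_eq_condExpL1 h₂ _))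
  filter_upwards [condExp_ae_eq_condExpL1 h₁ f, condExp_ae_eq_condExpL1 h₂ f] with x h₁x h₂x
  rw [h₁x, h₂x, hL1]

section Markov

variable {Ω E : Type*} {m0 : MeasurableSpace Ω} [mE : MeasurableSpace E] {μ : Measure Ω}
  {F : Filtration ℕ m0} {X : ℕ → Ω → E}

def OneStepMarkov (μ : Measure Ω) (F : Filtration ℕ m0) (X : ℕ → Ω → E) : Prop :=
  ∀ k (h : E → ℝ), Measurable h → (∃ C, ∀ y, |h y| ≤ C) →
    μ[fun ω => h (X (k + 1) ω) | F k] =ᵐ[μ] μ[fun ω => h (X (k + 1) ω) | mE.comap (X k)]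

theorem OneStepMarkov.condExp_ae_eq [IsFiniteMeasure μ] (hM : OneStepMarkov μ F X)
    (hX : ∀ n, Measurable (X n)) (k : ℕ) {v : E → ℝ} (hv : Measurable v)
    (hint : Integrable (fun ω => v (X (k + 1) ω)) μ) :
    μ[fun ω => v (X (k + 1) ω) | F k] =ᵐ[μ] μ[fun ω => v (X (k + 1) ω) | mE.comap (X k)] := by
  let trunc : ℕ → E → ℝ := fun n => {y | |v y| ≤ n}.indicator v
  have htrunc_meas : ∀ n, Measurable (trunc n) := fun n =>
    hv.indicator (measurableSet_le hv.abs measurable_const)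
  have htrunc_bound : ∀ n y, |trunc n y| ≤ n := fun n y => by
    by_cases hy : |v y| ≤ n <;> simp [trunc, hy]
  refine condExp_ae_eq_condExp_of_tendsto (F.le k) (hX k).comap_le (fun ω => |v (X (k + 1) ω)|)
    (fun n => ((htrunc_meas n).comp (hX _)).aestronglyMeasurable) hint.abs
    (fun n => ae_of_all _ fun ω => norm_indicator_le_norm_self _ _)
    (ae_of_all _ fun ω => ?_) fun n => hM k _ (htrunc_meas n) ⟨n, htrunc_bound n⟩
  refine tendsto_const_nhds.congr' ?_
  filter_upwards [eventually_ge_atTop ⌈|v (X (k + 1) ω)|⌉₊] with n hn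
  simp [trunc, (Nat.ceil_le.mp hn)]

end Markov

section Value

variable {Ω E : Type*} {m0 : MeasurableSpace Ω} [mE : MeasurableSpace E] (μ : Measure Ω)
  (X : ℕ → Ω → E)

noncomputable def transition (k : ℕ) (h : E → ℝ) : E → ℝ :=
  (stronglyMeasurable_condExp (m := mE.comap (X k)) (μ := μ)
    (f := fun ω => h (X (k + 1) ω))).exists_eq_measurable_comp.choose

lemma measurable_transition (k : ℕ) (h : E → ℝ) : Measurable (transition μ X k h) :=
  (stronglyMeasurable_condExp (m := mE.comap (X k)) (μ := μ)
    (f := fun ω => h (X (k + 1) ω))).exists_eq_measurable_comp.choose_spec.1.measurable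

lemma condExp_comap_eq_transition (k : ℕ) (h : E → ℝ) :
    μ[fun ω => h (X (k + 1) ω) | mE.comap (X k)] = fun ω => transition μ X k h (X k ω) :=
  (stronglyMeasurable_condExp (m := mE.comap (X k)) (μ := μ)
    (f := fun ω => h (X (k + 1) ω))).exists_eq_measurable_comp.choose_spec.2

variable (g : ℕ → E → ℝ) (N : ℕ)

noncomputable def value (k : ℕ) : E → ℝ :=
  if k < N then fun x => max (g k x) (transition μ X k (value (k + 1)) x) else g k
termination_by N - k

noncomputable def stopRule (k : ℕ) (x : E) : ℕ :=
  if value μ X g N k x ≤ g k x then 1 else 0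

variable {μ X g N}

lemma value_of_lt {k : ℕ} (hk : k < N) :
    value μ X g N k = fun x => max (g k x) (transition μ X k (value μ X g N (k + 1)) x) := by
  rw [value, if_pos hk]

lemma value_of_le {k : ℕ} (hk : N ≤ k) : value μ X g N k = g k := by
  rw [value, if_neg (not_lt.2 hk)]

lemma le_value (k : ℕ) (x : E) : g k x ≤ value μ X g N k x := by
  rcases lt_or_ge k N with hk | hk
  · rw [value_of_lt hk]
    exact le_max_left _ _
  · rw [value_of_le hk]

lemma measurable_value (hg : ∀ m, Measurable (g m)) (k : ℕ) : Measurable (value μ X g N k) := by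
  rw [value]
  split_ifs
  · exact (hg k).max (measurable_transition μ X k _)
  · exact hg k

lemma stopRule_le_one (k : ℕ) (x : E) : stopRule μ X g N k x ≤ 1 := by
  unfold stopRule
  split_ifs <;> simp

lemma stopRule_eq_one_iff {k : ℕ} {x : E} :
    stopRule μ X g N k x = 1 ↔ value μ X g N k x ≤ g k x := by
  unfold stopRule
  split_ifs with h <;> simp [h]

lemma stopRule_self (x : E) : stopRule μ X g N N x = 1 :=
  stopRule_eq_one_iff.2 (by rw [value_of_le le_rfl])

lemma measurable_stopRule (hg : ∀ m, Measurable (g m)) (k : ℕ) :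
    Measurable (stopRule μ X g N k) :=
  Measurable.ite (measurableSet_le (measurable_value hg k) (hg k)) measurable_const
    measurable_const

variable {F : Filtration ℕ m0}

lemma integrable_value_comp (hgint : ∀ m ≤ N, Integrable (fun ω => g m (X m ω)) μ) {k : ℕ}
    (hk : k ≤ N) : Integrable (fun ω => value μ X g N k (X k ω)) μ := by
  rcases hk.lt_or_eq with hk | rfl
  · simp only [value_of_lt hk]
    exact (hgint k hk.le).sup (condExp_comap_eq_transition μ X k _ ▸ integrable_condExp)
  · simpa only [value_of_le le_rfl] using hgint k le_rfl

lemma condExp_value_ae_eq [IsFiniteMeasure μ] (hM : OneStepMarkov μ F X)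
    (hXF : ∀ n, Measurable[F n] (X n)) (hg : ∀ m, Measurable (g m))
    (hgint : ∀ m ≤ N, Integrable (fun ω => g m (X m ω)) μ) {k : ℕ} (hk : k < N) :
    μ[fun ω => value μ X g N (k + 1) (X (k + 1) ω) | F k]
      =ᵐ[μ] fun ω => transition μ X k (value μ X g N (k + 1)) (X k ω) := by
  rw [← condExp_comap_eq_transition]
  exact hM.condExp_ae_eq (fun n => (hXF n).mono (F.le n) le_rfl) k (measurable_value hg _)
    (integrable_value_comp hgint hk)

lemma condExp_value_le [IsFiniteMeasure μ] (hM : OneStepMarkov μ F X)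
    (hXF : ∀ n, Measurable[F n] (X n)) (hg : ∀ m, Measurable (g m))
    (hgint : ∀ m ≤ N, Integrable (fun ω => g m (X m ω)) μ) {k : ℕ} (hk : k < N) :
    μ[fun ω => value μ X g N (k + 1) (X (k + 1) ω) | F k]
      ≤ᵐ[μ] fun ω => value μ X g N k (X k ω) := by
  filter_upwards [condExp_value_ae_eq hM hXF hg hgint hk] with ω hω
  rw [hω, value_of_lt hk]
  exact le_max_right _ _

lemma value_ae_eq_condExp_of_stopRule_ne_one [IsFiniteMeasure μ] (hM : OneStepMarkov μ F X)
    (hXF : ∀ n, Measurable[F n] (X n)) (hg : ∀ m, Measurable (g m))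
    (hgint : ∀ m ≤ N, Integrable (fun ω => g m (X m ω)) μ) {k : ℕ} (hk : k < N) :
    ∀ᵐ ω ∂μ, stopRule μ X g N k (X k ω) ≠ 1 →
      value μ X g N k (X k ω) = μ[fun ω => value μ X g N (k + 1) (X (k + 1) ω) | F k] ω := by
  filter_upwards [condExp_value_ae_eq hM hXF hg hgint hk] with ω hω hgo
  have hgo' := mt stopRule_eq_one_iff.2 hgo
  simp only [value_of_lt hk] at hgo' ⊢
  rw [hω, max_eq_right (not_le.1 fun h => hgo' (max_le le_rfl h)).le]

end Value

section OptimalRule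

variable {Ω E : Type*} {m0 : MeasurableSpace Ω} [MeasurableSpace E] {μ : Measure Ω}
  [IsFiniteMeasure μ] {F : Filtration ℕ m0} {X : ℕ → Ω → E} {g : ℕ → E → ℝ} {N : ℕ}

theorem isGreatest_integral_stopRule (hM : OneStepMarkov μ F X)
    (hXF : ∀ n, Measurable[F n] (X n)) (hg : ∀ m, Measurable (g m))
    (hgint : ∀ m ≤ N, Integrable (fun ω => g m (X m ω)) μ) :
    IsGreatest ((fun τ : Ω → ℕ => ∫ ω, g (τ ω) (X (τ ω) ω) ∂μ) ''
        {τ | IsStoppingTime F (fun ω => ((τ ω : ℕ) : WithTop ℕ)) ∧ ∀ ω, τ ω ∈ Finset.Icc 0 N})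
      (∫ ω, g (ruleTime (fun n => stopRule μ X g N n (X n ω)) N 0)
        (X (ruleTime (fun n => stopRule μ X g N n (X n ω)) N 0) ω) ∂μ) := by
  set U : ℕ → Ω → ℝ := fun n ω => value μ X g N n (X n ω)
  set b : ℕ → Ω → ℕ := fun n ω => stopRule μ X g N n (X n ω)
  have hb : ∀ n ω, b n ω ≤ 1 := fun n ω => stopRule_le_one n _
  have hbN : ∀ ω, b N ω = 1 := fun ω => stopRule_self _
  have hbF : ∀ n, MeasurableSet[F n] {ω | b n ω = 1} := fun n =>
    hXF n (measurable_stopRule hg n (measurableSet_singleton 1))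
  have hU : ∀ n ≤ N, Integrable (U n) μ := fun n hn => integrable_value_comp hgint hn
  have hUF : ∀ n ≤ N, StronglyMeasurable[F n] (U n) := fun n _ =>
    ((measurable_value hg n).comp (hXF n)).stronglyMeasurable
  have hτ : IsStoppingTime F (fun ω => ((ruleTime (b · ω) N 0 : ℕ) : WithTop ℕ)) :=
    isStoppingTime_ruleTime hb hbN hbF (Nat.zero_le N)
  refine ⟨⟨_, ⟨hτ, fun ω => Finset.mem_Icc.2 ⟨Nat.zero_le _,
    (ruleTime_mem_Icc (hb · ω) (hbN ω) (Nat.zero_le N)).2⟩⟩, rfl⟩, ?_⟩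
  rintro _ ⟨σ, ⟨hσ, hσN⟩, rfl⟩
  calc ∫ ω, g (σ ω) (X (σ ω) ω) ∂μ ≤ ∫ ω, U (min 0 N) ω ∂μ :=
        integral_comp_le_of_supermartingale (supermartingale_min_horizon hUF hU
          fun n => condExp_value_le hM hXF hg hgint) hgint
          (fun n hn ω => by simpa only [U, min_eq_left hn] using le_value n (X n ω)) hσ
          fun ω => (Finset.mem_Icc.1 (hσN ω)).2
    _ = _ := by
      simpa using (setIntegral_comp_ruleTime hb hbN hbF hgint hU
        (fun n _ ω h => le_antisymm (le_value n _) (stopRule_eq_one_iff.1 h))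
        (fun n => value_ae_eq_condExp_of_stopRule_ne_one hM hXF hg hgint)
        (Nat.zero_le N) MeasurableSet.univ).symm

end OptimalRule

theorem stmt3
    {Ω : Type*} {m0 : MeasurableSpace Ω} (μ : Measure Ω) [IsProbabilityMeasure μ]
    (d N : ℕ)
    (X : ℕ → Ω → (Fin d → ℝ)) (hX : ∀ m, StronglyMeasurable (X m))
    (hMarkov : ∀ (k : ℕ) (h : (ℕ → (Fin d → ℝ)) → ℝ), Measurable h →
      (∃ C, ∀ y, |h y| ≤ C) →
      μ[(fun ω => h (fun m => X (k + 1 + m) ω)) | (MeasureTheory.Filtration.natural X hX) k]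
        =ᵐ[μ] μ[(fun ω => h (fun m => X (k + 1 + m) ω)) | MeasurableSpace.comap (X k) inferInstance])
    (g : ℕ → (Fin d → ℝ) → ℝ) (hg : ∀ m, Measurable (g m))
    (hgint : ∀ m, m ≤ N → Integrable (fun ω => g m (X m ω)) μ) :
    ∃ f : ℕ → (Fin d → ℝ) → ℕ, (∀ m, Measurable (f m)) ∧ (∀ m x, f m x ≤ 1) ∧
      (∀ x, f N x = 1) ∧
      ∫ ω, g ((fun ω => ∑ m ∈ Finset.Icc 0 N,
            m * f m (X m ω) * ∏ j ∈ Finset.Ico 0 m, (1 - f j (X j ω))) ω)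
          (X ((fun ω => ∑ m ∈ Finset.Icc 0 N,
            m * f m (X m ω) * ∏ j ∈ Finset.Ico 0 m, (1 - f j (X j ω))) ω) ω) ∂μ
        = sSup ((fun τ : Ω → ℕ => ∫ ω, g (τ ω) (X (τ ω) ω) ∂μ) ''
            {τ | IsStoppingTime (MeasureTheory.Filtration.natural X hX) (fun ω => ((τ ω : ℕ) : WithTop ℕ)) ∧
              ∀ ω, τ ω ∈ Finset.Icc 0 N}) := by
  have hM : OneStepMarkov μ (Filtration.natural X hX) X := fun k h hh ⟨C, hC⟩ => by
    simpa using hMarkov k (fun y => h (y 0)) (hh.comp (measurable_pi_apply 0)) ⟨C, fun y => hC _⟩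
  have hXF : ∀ n, Measurable[Filtration.natural X hX n] (X n) := fun n =>
    (Filtration.stronglyAdapted_natural hX n).measurable
  refine ⟨stopRule μ X g N, measurable_stopRule hg, stopRule_le_one, stopRule_self, ?_⟩
  exact (isGreatest_integral_stopRule hM hXF hg hgint).csSup_eq.symm
end

section
/- Let $n \in \{0,\dots,N-1\}$, let $X=(X_n)_{n=0}^N$ be an $\mathbb{R}^d$-valued process with $\mathbb{E}|g(m,X_m)| < \infty$ for all $m$, and let $\tau_{n+1}$ be a stopping time with $n+1 \le \tau_{n+1} \le N$. Then for every $\varepsilon > 0$ there exists a function $f^\theta : \mathbb{R}^d \to \{0,1\}$ of the form $f^\theta = \mathbf{1}_{[0,\infty)} \circ a_2 \circ \varphi \circ a_1$, with $a_1 : \mathbb{R}^d \to \mathbb{R}^{q_1}$ and $a_2 : \mathbb{R}^{q_1} \to \mathbb{R}$ affine and $\varphi$ the componentwise ReLU, such that $\mathbb{E}[g(n,X_n) f^\theta(X_n) + g(\tau_{n+1}, X_{\tau_{n+1}})(1 - f^\theta(X_n))] \ge \sup_{f \in \mathcal{D}} \mathbb{E}[g(n,X_n) f(X_n) + g(\tau_{n+1},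 X_{\tau_{n+1}})(1 - f(X_n))] - \varepsilon$, where $\mathcal{D}$ is the set of all measurable functions $f : \mathbb{R}^d \to \{0,1\}$. -/
/-!
For the stopping region `A = {f = 1}` the objective is `J A = 𝔼[b] + 𝔼[(a - b); Xₙ ∈ A]`, where
`a = g(n, Xₙ)` and `b = g(τ, X_τ)`. Hence `J A - J B ≤ ν (A ∆ B)`, with `ν` the law of `Xₙ`
under the finite measure `|a - b| dμ`, and it suffices to approximate a measurable set `A` in
`ν`-measure by a set `{F ≥ 0}` with `F` a network. Approximate `𝟙_A` in `L¹(ν)` by a continuous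
`c`, choose a compact set carrying all but little of `ν`, and approximate `c - 1/2` uniformly there
to within `1/4`: outside a set of small measure, `F ≥ 0` exactly on `A`.

Uniform approximation on compact sets follows from Stone–Weierstrass applied to the algebra spanned
by the ridge functions `exp ∘ ℓ`, each of which is a uniform limit of networks on a compact set by
piecewise linear interpolation in one variable.
-/

open MeasureTheory Filter Set

open scoped symmDiff

noncomputable def ContinuousMap.restrictₗ {X : Type*} [TopologicalSpace X] (K : Set X) :
    C(X, ℝ) →ₗ[ℝ] C(K, ℝ) :=
  (ContinuousMap.compRightAlgHom ℝ ℝ ⟨((↑) : K → X), continuous_subtype_val⟩).toLinearMap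

section Networks

variable {E : Type*} [TopologicalSpace E] [AddCommGroup E] [Module ℝ E]

def reluNeuron (ℓ : E →L[ℝ] ℝ) (b : ℝ) : C(E, ℝ) :=
  ⟨fun x => max (ℓ x + b) 0, by fun_prop⟩

@[simp]
theorem reluNeuron_apply (ℓ : E →L[ℝ] ℝ) (b : ℝ) (x : E) :
    reluNeuron ℓ b x = max (ℓ x + b) 0 :=
  rfl

variable (E) in
/-- No output bias is needed: the constant `1` is the neuron with `ℓ = 0`, `b = 1`. -/
def reluNetworks : Submodule ℝ C(E, ℝ) :=
  Submodule.span ℝ (Set.range fun p : (E →L[ℝ] ℝ) × ℝ => reluNeuron p.1 p.2)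

theorem reluNeuron_mem_reluNetworks (ℓ : E →L[ℝ] ℝ) (b : ℝ) :
    reluNeuron ℓ b ∈ reluNetworks E :=
  Submodule.subset_span ⟨(ℓ, b), rfl⟩

theorem comp_mem_reluNetworks {F : C(ℝ, ℝ)} (hF : F ∈ reluNetworks ℝ) (ℓ : E →L[ℝ] ℝ) :
    F.comp (ℓ : C(E, ℝ)) ∈ reluNetworks E := by
  refine (Submodule.span_le (p := (reluNetworks E).comap
    (ContinuousMap.compRightAlgHom ℝ ℝ (ℓ : C(E, ℝ))).toLinearMap)).mpr ?_ hF
  rintro _ ⟨⟨a, b⟩, rfl⟩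
  exact reluNeuron_mem_reluNetworks (a.comp ℓ) b

end Networks

theorem exists_matrix_of_mem_reluNetworks {d : ℕ} {F : C(Fin d → ℝ, ℝ)}
    (hF : F ∈ reluNetworks (Fin d → ℝ)) :
    ∃ (q : ℕ) (A1 : Matrix (Fin q) (Fin d) ℝ) (b1 : Fin q → ℝ) (A2 : Fin q → ℝ) (b2 : ℝ),
      ∀ x, F x = (∑ i, A2 i * max ((Matrix.mulVec A1 x) i + b1 i) 0) + b2 := by
  obtain ⟨c, rfl⟩ := Finsupp.mem_span_range_iff_exists_finsupp.mp hF
  let p : Fin c.support.card → ((Fin d → ℝ) →L[ℝ] ℝ) × ℝ := fun i => c.support.equivFin.symm i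
  refine ⟨c.support.card,
    LinearMap.toMatrix' (LinearMap.pi fun i => ((p i).1 : (Fin d → ℝ) →ₗ[ℝ] ℝ)),
    fun i => (p i).2, fun i => c (p i), 0, fun x => ?_⟩
  simp only [Finsupp.sum, ContinuousMap.coe_sum, Finset.sum_apply, ContinuousMap.smul_apply,
    reluNeuron_apply, smul_eq_mul, LinearMap.toMatrix'_mulVec, LinearMap.pi_apply,
    ContinuousLinearMap.coe_coe, add_zero, p]
  rw [← Finset.sum_coe_sort c.support, ← c.support.equivFin.symm.sum_comp]

section OneDim

noncomputable def reluRamp (s Δ : ℝ) : C(ℝ, ℝ) :=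
  Δ⁻¹ • (reluNeuron (ContinuousLinearMap.id ℝ ℝ) (-s) -
    reluNeuron (ContinuousLinearMap.id ℝ ℝ) (-(s + Δ)))

theorem reluRamp_mem_reluNetworks (s Δ : ℝ) : reluRamp s Δ ∈ reluNetworks ℝ :=
  Submodule.smul_mem _ _ (Submodule.sub_mem _ (reluNeuron_mem_reluNetworks _ _)
    (reluNeuron_mem_reluNetworks _ _))

theorem reluRamp_apply {Δ : ℝ} (hΔ : 0 ≤ Δ) (s t : ℝ) :
    reluRamp s Δ t = min (max (t - s) 0) Δ / Δ := by
  simp only [reluRamp, ContinuousMap.smul_apply, ContinuousMap.sub_apply, reluNeuron_apply,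
    ContinuousLinearMap.id_apply, smul_eq_mul, ← sub_eq_add_neg, inv_mul_eq_div]
  congr 1
  rcases le_total (t - s) 0 with h | h
  · simp [h, hΔ, show t - (s + Δ) ≤ 0 by linarith]
  rcases le_total (t - s) Δ with h' | h'
  · simp [h, h', show t - (s + Δ) ≤ 0 by linarith]
  · simp [h, h', show 0 ≤ t - (s + Δ) by linarith]

theorem reluRamp_of_le {s Δ t : ℝ} (hΔ : 0 ≤ Δ) (h : t ≤ s) : reluRamp s Δ t = 0 := by
  simp [reluRamp_apply hΔ, max_eq_right (sub_nonpos.mpr h), hΔ]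

theorem reluRamp_of_add_le {s Δ t : ℝ} (hΔ : 0 < Δ) (h : s + Δ ≤ t) : reluRamp s Δ t = 1 := by
  rw [reluRamp_apply hΔ.le, max_eq_left (by linarith), min_eq_right (by linarith),
    div_self hΔ.ne']

theorem reluRamp_anti {s s' Δ : ℝ} (hΔ : 0 ≤ Δ) (h : s ≤ s') (t : ℝ) :
    reluRamp s' Δ t ≤ reluRamp s Δ t := by
  rw [reluRamp_apply hΔ, reluRamp_apply hΔ]
  gcongr

theorem abs_sum_mul_sub_le_of_sum_eq_one {ι : Type*} (s : Finset ι) {w v : ι → ℝ} {y ε : ℝ}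
    (hw : ∀ i ∈ s, 0 ≤ w i) (hsum : ∑ i ∈ s, w i = 1) (hv : ∀ i ∈ s, w i ≠ 0 → |v i - y| ≤ ε) :
    |∑ i ∈ s, w i * v i - y| ≤ ε :=
  calc |∑ i ∈ s, w i * v i - y| = |∑ i ∈ s, w i * (v i - y)| := by
        simp only [mul_sub, Finset.sum_sub_distrib, ← Finset.sum_mul, hsum, one_mul]
    _ ≤ ∑ i ∈ s, w i * ε := by
        refine (Finset.abs_sum_le_sum_abs _ _).trans (Finset.sum_le_sum fun i hi => ?_)
        rw [abs_mul, abs_of_nonneg (hw i hi)]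
        rcases eq_or_ne (w i) 0 with h | h
        · simp [h]
        · exact mul_le_mul_of_nonneg_left (hv i hi h) (hw i hi)
    _ = ε := by rw [← Finset.sum_mul, hsum, one_mul]

noncomputable def reluHat (c Δ : ℝ) : C(ℝ, ℝ) :=
  reluRamp (c - Δ) Δ - reluRamp c Δ

theorem reluHat_mem_reluNetworks (c Δ : ℝ) : reluHat c Δ ∈ reluNetworks ℝ :=
  Submodule.sub_mem _ (reluRamp_mem_reluNetworks _ _) (reluRamp_mem_reluNetworks _ _)

theorem reluHat_nonneg {Δ : ℝ} (hΔ : 0 ≤ Δ) (c t : ℝ) : 0 ≤ reluHat c Δ t :=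
  sub_nonneg.mpr (reluRamp_anti hΔ (by linarith) t)

theorem abs_sub_lt_of_reluHat_ne_zero {c Δ t : ℝ} (hΔ : 0 < Δ) (h : reluHat c Δ t ≠ 0) :
    |t - c| < Δ := by
  refine abs_sub_lt_iff.mpr ⟨?_, ?_⟩ <;> by_contra! hle <;> refine h ?_
  · simp [reluHat, reluRamp_of_add_le hΔ (by linarith : c - Δ + Δ ≤ t),
      reluRamp_of_add_le hΔ (by linarith : c + Δ ≤ t)]
  · simp [reluHat, reluRamp_of_le hΔ.le (by linarith : t ≤ c - Δ),
      reluRamp_of_le hΔ.le (by linarith : t ≤ c)]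

/-- The hats centred at the nodes `a + jΔ` telescope: consecutive ones share a ramp. -/
theorem sum_reluHat_eq_one {a Δ t : ℝ} (hΔ : 0 < Δ) {n : ℕ} (ht : t ∈ Icc a (a + n * Δ)) :
    ∑ j ∈ Finset.range (n + 1), reluHat (a + j * Δ) Δ t = 1 := by
  have htelescope : ∀ j : ℕ, reluHat (a + j * Δ) Δ t =
      reluRamp (a + j * Δ - Δ) Δ t - reluRamp (a + (j + 1 : ℕ) * Δ - Δ) Δ t := fun j => by
    simp only [reluHat, ContinuousMap.sub_apply, Nat.cast_succ, add_one_mul]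
    ring_nf
  rw [Finset.sum_congr rfl fun j _ => htelescope j, Finset.sum_range_sub',
    reluRamp_of_add_le hΔ (by simpa using ht.1),
    reluRamp_of_le hΔ.le (by push_cast; linarith [ht.2]), sub_zero]

/-- Piecewise linear interpolation of `h` at the nodes `a + jΔ`, as a convex combination of the
values `h (a + jΔ)` with the hats as weights. -/
theorem exists_mem_reluNetworks_abs_sub_le_on_Icc (h : C(ℝ, ℝ)) (a b : ℝ) {ε : ℝ} (hε : 0 < ε) :
    ∃ F ∈ reluNetworks ℝ, ∀ t ∈ Icc a b, |F t - h t| ≤ ε := by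
  obtain ⟨δ, hδ, hh⟩ := Metric.uniformContinuousOn_iff.mp
    ((isCompact_Icc (a := a - 1) (b := b + 1)).uniformContinuousOn_of_continuous
      h.continuous.continuousOn) ε hε
  set Δ := min δ 1
  have hΔ : 0 < Δ := lt_min hδ one_pos
  set n := ⌈(b - a) / Δ⌉₊
  refine ⟨∑ j ∈ Finset.range (n + 1), h (a + j * Δ) • reluHat (a + j * Δ) Δ,
    Submodule.sum_mem _ fun j _ => Submodule.smul_mem _ _ (reluHat_mem_reluNetworks _ _),
    fun t ht => ?_⟩
  have hbn : b ≤ a + n * Δ := by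
    linarith [(div_le_iff₀ hΔ).mp (Nat.le_ceil ((b - a) / Δ))]
  have hclose : ∀ j : ℕ, reluHat (a + j * Δ) Δ t ≠ 0 → |h (a + j * Δ) - h t| ≤ ε := by
    intro j hj
    have hnear := abs_sub_lt_iff.mp (abs_sub_lt_of_reluHat_ne_zero hΔ hj)
    have hΔ1 : Δ ≤ 1 := min_le_right _ _
    have hΔδ : Δ ≤ δ := min_le_left _ _
    have hnode : a + j * Δ ∈ Icc (a - 1) (b + 1) := ⟨by linarith [ht.1], by linarith [ht.2]⟩
    refine (hh _ hnode t ⟨by linarith [ht.1], by linarith [ht.2]⟩ ?_).le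
    rw [Real.dist_eq, abs_sub_lt_iff]
    constructor <;> linarith
  have := abs_sum_mul_sub_le_of_sum_eq_one _ (fun j _ => reluHat_nonneg hΔ.le _ t)
    (sum_reluHat_eq_one hΔ ⟨ht.1, ht.2.trans hbn⟩) fun j _ => hclose j
  simpa [mul_comm] using this

end OneDim

section Compact

variable {E : Type*} [TopologicalSpace E] [AddCommGroup E] [Module ℝ E]

theorem restrict_comp_mem_closure_reluNetworks {K : Set E} [CompactSpace K] (φ : C(ℝ, ℝ))
    (ℓ : E →L[ℝ] ℝ) :
    ContinuousMap.restrictₗ K (φ.comp (ℓ : C(E, ℝ))) ∈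
      ((reluNetworks E).map (ContinuousMap.restrictₗ K)).topologicalClosure := by
  have hK : IsCompact (ℓ '' K) := (isCompact_iff_compactSpace.mpr ‹_›).image ℓ.continuous
  obtain ⟨lo, hlo⟩ := hK.bddBelow
  obtain ⟨hi, hhi⟩ := hK.bddAbove
  refine Metric.mem_closure_iff.mpr fun ε hε => ?_
  obtain ⟨F, hF, hFφ⟩ := exists_mem_reluNetworks_abs_sub_le_on_Icc φ lo hi (half_pos hε)
  refine ⟨_, Submodule.mem_map_of_mem (comp_mem_reluNetworks hF ℓ), ?_⟩
  refine lt_of_le_of_lt ((ContinuousMap.dist_le (half_pos hε).le).mpr fun x => ?_) (half_lt_self hε)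
  rw [Real.dist_eq, abs_sub_comm]
  exact hFφ _ ⟨hlo (mem_image_of_mem ℓ x.2), hhi (mem_image_of_mem ℓ x.2)⟩

variable [SeparatingDual ℝ E]

/-- Stone–Weierstrass applied to the algebra spanned by the exponential ridge functions
`exp ∘ ℓ`, each of which is a uniform limit of networks on `K`. -/
theorem topologicalClosure_map_restrict_reluNetworks (K : Set E) [CompactSpace K] :
    ((reluNetworks E).map (ContinuousMap.restrictₗ K)).topologicalClosure = ⊤ := by
  let G : (E →L[ℝ] ℝ) → C(K, ℝ) := fun ℓ =>
    ContinuousMap.restrictₗ K ((⟨Real.exp, Real.continuous_exp⟩ : C(ℝ, ℝ)).comp ℓ)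
  have hG : ∀ ℓ x, G ℓ x = Real.exp (ℓ x) := fun _ _ => rfl
  let M : Submonoid C(K, ℝ) :=
    { carrier := range G
      mul_mem' := by
        rintro _ _ ⟨ℓ, rfl⟩ ⟨ℓ', rfl⟩
        exact ⟨ℓ + ℓ', by ext; simp [hG, Real.exp_add]⟩
      one_mem' := ⟨0, by ext; simp [hG]⟩ }
  have hspan : Subalgebra.toSubmodule (Algebra.adjoin ℝ (range G)) = Submodule.span ℝ (range G) :=
    Algebra.adjoin_eq_span_of_subset ℝ <| by
      have : Submonoid.closure (range G) ≤ M := Submonoid.closure_le.mpr subset_rfl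
      exact (SetLike.coe_subset_coe.mpr this).trans Submodule.subset_span
  have hsep : (Algebra.adjoin ℝ (range G)).SeparatesPoints := by
    intro x y hxy
    obtain ⟨ℓ, hℓ⟩ := SeparatingDual.exists_separating_of_ne (R := ℝ) (Subtype.coe_ne_coe.mpr hxy)
    exact ⟨G ℓ, ⟨G ℓ, Algebra.subset_adjoin ⟨ℓ, rfl⟩, rfl⟩, by simpa [hG] using hℓ⟩
  have hle : (Algebra.adjoin ℝ (range G) : Set C(K, ℝ)) ⊆
      ((reluNetworks E).map (ContinuousMap.restrictₗ K)).topologicalClosure := by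
    rw [← Subalgebra.coe_toSubmodule, hspan, SetLike.coe_subset_coe, Submodule.span_le]
    rintro _ ⟨ℓ, rfl⟩
    exact restrict_comp_mem_closure_reluNetworks _ ℓ
  refine eq_top_iff.mpr fun f _ => closure_minimal hle (Submodule.isClosed_topologicalClosure _) ?_
  rw [← Subalgebra.topologicalClosure_coe,
    ContinuousMap.subalgebra_topologicalClosure_eq_top_of_separatesPoints _ hsep]
  trivial

theorem exists_mem_reluNetworks_abs_sub_lt_on_compact {K : Set E} (hK : IsCompact K)
    (c : C(E, ℝ)) {ε : ℝ} (hε : 0 < ε) :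
    ∃ F ∈ reluNetworks E, ∀ x ∈ K, |F x - c x| < ε := by
  have := isCompact_iff_compactSpace.mp hK
  have hc : ContinuousMap.restrictₗ K c ∈
      ((reluNetworks E).map (ContinuousMap.restrictₗ K)).topologicalClosure := by
    rw [topologicalClosure_map_restrict_reluNetworks]; trivial
  obtain ⟨_, ⟨F, hF, rfl⟩, hFc⟩ := Metric.mem_closure_iff.mp hc ε hε
  refine ⟨F, hF, fun x hx => ?_⟩
  rw [← Real.dist_eq, dist_comm]
  exact (ContinuousMap.dist_apply_le_dist ⟨x, hx⟩).trans_lt hFc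

end Compact

theorem exists_mem_reluNetworks_measureReal_symmDiff_le {E : Type*} [TopologicalSpace E]
    [AddCommGroup E] [Module ℝ E] [SeparatingDual ℝ E] [PolishSpace E] [MeasurableSpace E]
    [BorelSpace E] (ν : Measure E) [IsFiniteMeasure ν] {A : Set E} (hA : MeasurableSet A)
    {δ : ℝ} (hδ : 0 < δ) :
    ∃ F ∈ reluNetworks E, ν.real (A ∆ {x | 0 ≤ F x}) ≤ δ := by
  have hA1 : Integrable (A.indicator fun _ => (1 : ℝ)) ν := (integrable_const 1).indicator hA
  obtain ⟨c, hcA, -⟩ := hA1.exists_boundedContinuous_integral_sub_le (show 0 < δ / 8 by positivity)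
  obtain ⟨K, -, hK, hKν⟩ := MeasurableSet.univ.exists_isCompact_sdiff_lt (measure_ne_top ν univ)
    (ENNReal.ofReal_pos.mpr (half_pos hδ)).ne'
  obtain ⟨F, hF, hFc⟩ := exists_mem_reluNetworks_abs_sub_lt_on_compact hK
    (c.toContinuousMap - ContinuousMap.const E (1 / 2)) (show (0 : ℝ) < 1 / 4 by norm_num)
  refine ⟨F, hF, ?_⟩
  set B := {x | 1 / 4 ≤ ‖A.indicator (fun _ => (1 : ℝ)) x - c x‖}
  have hcover : A ∆ {x | 0 ≤ F x} ⊆ (univ \ K) ∪ B := by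
    intro x hx
    by_cases hxK : x ∈ K
    · right
      have hFx := abs_lt.mp (hFc x hxK)
      simp only [ContinuousMap.sub_apply, ContinuousMap.const_apply,
        BoundedContinuousFunction.coe_toContinuousMap] at hFx
      show 1 / 4 ≤ ‖A.indicator (fun _ => (1 : ℝ)) x - c x‖
      rw [Real.norm_eq_abs]
      rcases Set.mem_symmDiff.mp hx with ⟨hxA, hF0⟩ | ⟨hF0, hxA⟩
      · have : F x < 0 := not_le.mp hF0
        rw [indicator_of_mem hxA]
        exact le_abs.mpr (Or.inl (by linarith))
      · have : 0 ≤ F x := hF0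
        rw [indicator_of_notMem hxA]
        exact le_abs.mpr (Or.inr (by linarith))
    · exact Or.inl ⟨trivial, hxK⟩
  have hKν' : ν.real (univ \ K) ≤ δ / 2 := ENNReal.toReal_le_of_le_ofReal (half_pos hδ).le hKν.le
  have hB : ν.real B ≤ δ / 2 := by
    have := mul_meas_ge_le_integral_of_nonneg (Eventually.of_forall fun x => norm_nonneg _)
      (hA1.sub (BoundedContinuousFunction.integrable ν c)).norm (1 / 4)
    simp only [Pi.sub_apply] at this
    linarith
  calc ν.real (A ∆ {x | 0 ≤ F x}) ≤ ν.real ((univ \ K) ∪ B) := measureReal_mono hcover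
    _ ≤ ν.real (univ \ K) + ν.real B := measureReal_union_le _ _
    _ ≤ δ := by linarith

section OptimalStopping

variable {Ω E : Type*} {m0 : MeasurableSpace Ω}

noncomputable def exercisePayoff (μ : Measure Ω) (Y : Ω → E) (a b : Ω → ℝ) (A : Set E) : ℝ :=
  ∫ ω, (a ω * A.indicator 1 (Y ω) + b ω * (1 - A.indicator 1 (Y ω))) ∂μ

variable {μ : Measure Ω} {Y : Ω → E} {a b : Ω → ℝ}

theorem integral_eq_exercisePayoff {f : E → ℝ} (hf : ∀ x, f x = 0 ∨ f x = 1) :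
    ∫ ω, (a ω * f (Y ω) + b ω * (1 - f (Y ω))) ∂μ = exercisePayoff μ Y a b {x | f x = 1} := by
  refine integral_congr_ae (Eventually.of_forall fun ω => ?_)
  rcases hf (Y ω) with h | h <;> simp [h]

variable [MeasurableSpace E]

theorem exercisePayoff_eq (hY : Measurable Y) (ha : Integrable a μ) (hb : Integrable b μ)
    {A : Set E} (hA : MeasurableSet A) :
    exercisePayoff μ Y a b A = ∫ ω, b ω ∂μ + ∫ ω in Y ⁻¹' A, (a ω - b ω) ∂μ := by
  have hH : Integrable (fun ω => a ω - b ω) μ := ha.sub hb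
  rw [← integral_indicator (hY hA), ← integral_add hb (hH.indicator (hY hA))]
  refine integral_congr_ae (Eventually.of_forall fun ω => ?_)
  by_cases h : Y ω ∈ A <;> simp [h]

theorem exercisePayoff_sub_le (hY : Measurable Y) (ha : Integrable a μ) (hb : Integrable b μ)
    {A B : Set E} (hA : MeasurableSet A) (hB : MeasurableSet B) :
    exercisePayoff μ Y a b A - exercisePayoff μ Y a b B ≤ ∫ ω in Y ⁻¹' (A ∆ B), |a ω - b ω| ∂μ := by
  have hH : Integrable (fun ω => a ω - b ω) μ := ha.sub hb
  rw [exercisePayoff_eq hY ha hb hA, exercisePayoff_eq hY ha hb hB, add_sub_add_left_eq_sub,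
    ← integral_indicator (hY hA), ← integral_indicator (hY hB),
    ← integral_sub (hH.indicator (hY hA)) (hH.indicator (hY hB)),
    ← integral_indicator (hY (hA.symmDiff hB))]
  refine integral_mono ((hH.indicator (hY hA)).sub (hH.indicator (hY hB)))
    (hH.abs.indicator (hY (hA.symmDiff hB))) fun ω => ?_
  have := neg_abs_le (a ω - b ω)
  by_cases hωA : Y ω ∈ A <;> by_cases hωB : Y ω ∈ B <;>
    simp [hωA, hωB, Set.mem_symmDiff, le_abs_self]
  linarith

theorem setIntegral_preimage_abs_eq_measureReal (hY : Measurable Y) {h : Ω → ℝ}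
    (hh : AEStronglyMeasurable h μ) {S : Set E} (hS : MeasurableSet S) :
    ∫ ω in Y ⁻¹' S, |h ω| ∂μ =
      (Measure.map Y (μ.withDensity fun ω => ENNReal.ofReal |h ω|)).real S := by
  rw [measureReal_def, Measure.map_apply hY hS, withDensity_apply _ (hY hS),
    integral_eq_lintegral_of_nonneg_ae (Eventually.of_forall fun _ => abs_nonneg _)
      hh.norm.restrict]

theorem integrable_comp_of_isStoppingTime_s6 {ℱ : Filtration ℕ m0} {τ : Ω → ℕ}
    (hτ : IsStoppingTime ℱ fun ω => (τ ω : WithTop ℕ)) {u : ℕ → Ω → ℝ} {N : ℕ}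
    (hu : ∀ m, m ≤ N → Integrable (u m) μ) (hτN : ∀ ω, τ ω ≤ N) :
    Integrable (fun ω => u (τ ω) ω) μ := by
  have := integrable_stoppedValue ℕ hτ (u := fun m => u (min m N))
    (fun m => hu _ (min_le_right _ _)) (N := N) (fun ω => WithTop.coe_le_coe.mpr (hτN ω))
  convert this using 2 with ω
  change u (τ ω) ω = u (min (τ ω) N) ω
  rw [min_eq_left (hτN ω)]

theorem exists_mem_reluNetworks_sSup_sub_le_integral [TopologicalSpace E]
    [AddCommGroup E] [Module ℝ E] [SeparatingDual ℝ E] [PolishSpace E] [BorelSpace E] (hY : Measurable Y) (ha : Integrable a μ) (hb : Integrable b μ) {ε : ℝ}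
    (hε : 0 < ε) :
    ∃ F ∈ reluNetworks E,
      sSup {r | ∃ f : E → ℝ, Measurable f ∧ (∀ x, f x = 0 ∨ f x = 1) ∧
          r = ∫ ω, (a ω * f (Y ω) + b ω * (1 - f (Y ω))) ∂μ} - ε ≤
        ∫ ω, (a ω * (if 0 ≤ F (Y ω) then 1 else 0) +
          b ω * (1 - if 0 ≤ F (Y ω) then 1 else 0)) ∂μ := by
  have := isFiniteMeasure_withDensity_ofReal (ha.sub hb).abs.hasFiniteIntegral
  set ν := Measure.map Y (μ.withDensity fun ω => ENNReal.ofReal |a ω - b ω|)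
  have hJ : ∀ A B, MeasurableSet A → MeasurableSet B →
      exercisePayoff μ Y a b A - exercisePayoff μ Y a b B ≤ ν.real (A ∆ B) :=
    fun A B hA hB => (exercisePayoff_sub_le hY ha hb hA hB).trans_eq
      (setIntegral_preimage_abs_eq_measureReal hY (ha.sub hb).aestronglyMeasurable (hA.symmDiff hB))
  set S := {r | ∃ f : E → ℝ, Measurable f ∧ (∀ x, f x = 0 ∨ f x = 1) ∧
    r = ∫ ω, (a ω * f (Y ω) + b ω * (1 - f (Y ω))) ∂μ}
  obtain ⟨_, ⟨f, hf, hf01, rfl⟩, hlt⟩ := exists_lt_of_lt_csSup (s := S)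
    ⟨_, _, measurable_const, fun _ => Or.inl rfl, rfl⟩ (sub_lt_self _ (half_pos hε))
  have hA : MeasurableSet {x | f x = 1} := hf (measurableSet_singleton 1)
  obtain ⟨F, hF, hFA⟩ := exists_mem_reluNetworks_measureReal_symmDiff_le ν hA (half_pos hε)
  refine ⟨F, hF, ?_⟩
  have hset : {x | (if 0 ≤ F x then (1 : ℝ) else 0) = 1} = {x | 0 ≤ F x} := by ext; simp
  rw [integral_eq_exercisePayoff hf01] at hlt
  rw [integral_eq_exercisePayoff (f := fun x => if 0 ≤ F x then 1 else 0)
    (fun x => by split_ifs <;> simp), hset]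
  linarith [hJ _ {x | 0 ≤ F x} hA (measurableSet_le measurable_const F.continuous.measurable)]

end OptimalStopping

theorem stmt6_general
    {Ω : Type*} {m0 : MeasurableSpace Ω} (μ : Measure Ω)
    (d N n : ℕ) (hn : n < N)
    (X : ℕ → Ω → (Fin d → ℝ)) (hX : ∀ m, StronglyMeasurable (X m))
    (g : ℕ → (Fin d → ℝ) → ℝ)
    (hgint : ∀ m, m ≤ N → Integrable (fun ω => g m (X m ω)) μ)
    (τ : Ω → ℕ) (hτ : IsStoppingTime (MeasureTheory.Filtration.natural X hX) (fun ω => (τ ω : WithTop ℕ)))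
    (hτr : ∀ ω, τ ω ∈ Finset.Icc (n + 1) N)
    (ε : ℝ) (hε : 0 < ε) :
    ∃ (q1 : ℕ) (A1 : Matrix (Fin q1) (Fin d) ℝ) (b1 : Fin q1 → ℝ)
      (A2 : Fin q1 → ℝ) (b2 : ℝ),
      ∫ ω, (g n (X n ω) *
            (if 0 ≤ (∑ i, A2 i * max ((Matrix.mulVec A1 (X n ω)) i + b1 i) 0) + b2
              then (1 : ℝ) else 0)
          + g (τ ω) (X (τ ω) ω) *
            (1 - (if 0 ≤ (∑ i, A2 i * max ((Matrix.mulVec A1 (X n ω)) i + b1 i) 0) + b2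
              then (1 : ℝ) else 0))) ∂μ
        ≥ sSup {r : ℝ | ∃ f : (Fin d → ℝ) → ℝ, Measurable f ∧
              (∀ x, f x = 0 ∨ f x = 1) ∧
              r = ∫ ω, (g n (X n ω) * f (X n ω)
                    + g (τ ω) (X (τ ω) ω) * (1 - f (X n ω))) ∂μ}
          - ε := by
  have hb : Integrable (fun ω => g (τ ω) (X (τ ω) ω)) μ :=
    integrable_comp_of_isStoppingTime_s6 hτ hgint fun ω => (Finset.mem_Icc.mp (hτr ω)).2
  obtain ⟨F, hF, hFε⟩ :=
    exists_mem_reluNetworks_sSup_sub_le_integral (hX n).measurable (hgint n hn.le) hb hε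
  obtain ⟨q1, A1, b1, A2, b2, hFrep⟩ := exists_matrix_of_mem_reluNetworks hF
  refine ⟨q1, A1, b1, A2, b2, ?_⟩
  simpa only [← hFrep] using hFε

theorem stmt6
    {Ω : Type*} {m0 : MeasurableSpace Ω} (μ : Measure Ω) [IsProbabilityMeasure μ]
    (d N n : ℕ) (hn : n < N)
    (X : ℕ → Ω → (Fin d → ℝ)) (hX : ∀ m, StronglyMeasurable (X m))
    (g : ℕ → (Fin d → ℝ) → ℝ) (hg : ∀ m, Measurable (g m))
    (hgint : ∀ m, m ≤ N → Integrable (fun ω => g m (X m ω)) μ)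
    (τ : Ω → ℕ) (hτ : IsStoppingTime (MeasureTheory.Filtration.natural X hX) (fun ω => (τ ω : WithTop ℕ)))
    (hτr : ∀ ω, τ ω ∈ Finset.Icc (n + 1) N)
    (ε : ℝ) (hε : 0 < ε) :
    ∃ (q1 : ℕ) (A1 : Matrix (Fin q1) (Fin d) ℝ) (b1 : Fin q1 → ℝ)
      (A2 : Fin q1 → ℝ) (b2 : ℝ),
      ∫ ω, (g n (X n ω) *
            (if 0 ≤ (∑ i, A2 i * max ((Matrix.mulVec A1 (X n ω)) i + b1 i) 0) + b2
              then (1 : ℝ) else 0)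
          + g (τ ω) (X (τ ω) ω) *
            (1 - (if 0 ≤ (∑ i, A2 i * max ((Matrix.mulVec A1 (X n ω)) i + b1 i) 0) + b2
              then (1 : ℝ) else 0))) ∂μ
        ≥ sSup {r : ℝ | ∃ f : (Fin d → ℝ) → ℝ, Measurable f ∧
              (∀ x, f x = 0 ∨ f x = 1) ∧
              r = ∫ ω, (g n (X n ω) * f (X n ω)
                    + g (τ ω) (X (τ ω) ω) * (1 - f (X n ω))) ∂μ}
          - ε :=
  stmt6_general (m0 := m0) μ d N n hn X hX g hgint τ hτ hτr ε hε
end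

section
/- Let $(g(n,X_n))_{n=0}^N$ be an integrable adapted process with Snell envelope $H_n$ and Doob--Meyer decomposition $H_n = H_0 + M^H_n - A^H_n$, and let $(\varepsilon_n)_{n=0}^N$ be integrable random variables. Then $V_0 := H_0 \ge \mathbb{E}\big[\max_{0 \le n \le N}(g(n,X_n) - M^H_n - \varepsilon_n)\big] + \mathbb{E}\big[\min_{0 \le n \le N}(A^H_n + \varepsilon_n)\big]$. -/
/-!
Let `n₀` realise the maximum of `G - M - ε`. Since the Snell envelope dominates `G` and
`H_n - M_n + A_n = H_0`, pointwise
`max_n (G_n - M_n - ε_n) + min_n (A_n + ε_n) ≤ G_{n₀} - M_{n₀} + A_{n₀} ≤ H_0`;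
integrating gives the bound.
-/

open MeasureTheory Filter

theorem Finset.sup'_add_inf'_le_sup'_add {ι α : Type*} [AddCommMonoid α] [LinearOrder α]
    [IsOrderedAddMonoid α] {s : Finset ι} (hs : s.Nonempty) (f g : ι → α) :
    s.sup' hs f + s.inf' hs g ≤ s.sup' hs (f + g) := by
  obtain ⟨i, hi, hfi⟩ := s.exists_mem_eq_sup' hs f
  calc s.sup' hs f + s.inf' hs g ≤ f i + g i := by
        rw [hfi]; gcongr; exact s.inf'_le g hi
    _ ≤ s.sup' hs (f + g) := s.le_sup' (f + g) hi

section Integrable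

variable {Ω ι β : Type*} {m0 : MeasurableSpace Ω} {μ : Measure Ω}
  [NormedAddCommGroup β] [Lattice β] [HasSolidNorm β] [IsOrderedAddMonoid β]
  {s : Finset ι} (hs : s.Nonempty) {f : ι → Ω → β}

theorem MeasureTheory.Integrable.finset_sup' (hf : ∀ i ∈ s, Integrable (f i) μ) :
    Integrable (fun ω => s.sup' hs fun i => f i ω) μ := by
  simpa only [← Finset.sup'_apply] using
    Finset.sup'_induction (p := (Integrable · μ)) hs f (fun _ hf _ hg => hf.sup hg) hf

theorem MeasureTheory.Integrable.finset_inf' (hf : ∀ i ∈ s, Integrable (f i) μ) :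
    Integrable (fun ω => s.inf' hs fun i => f i ω) μ := by
  simpa only [← Finset.inf'_apply] using
    Finset.inf'_induction (p := (Integrable · μ)) hs f (fun _ hf _ hg => hf.inf hg) hf

end Integrable

theorem ae_le_of_snell_recursion {Ω : Type*} {m0 : MeasurableSpace Ω} {μ : Measure Ω}
    {ℱ : Filtration ℕ m0} {N : ℕ} {G H : ℕ → Ω → ℝ} (hHN : H N =ᵐ[μ] G N)
    (hHrec : ∀ n, n < N → H n =ᵐ[μ] fun ω => max (G n ω) ((μ[H (n + 1) | ℱ n]) ω))
    {n : ℕ} (hn : n ≤ N) : G n ≤ᵐ[μ] H n := by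
  rcases hn.lt_or_eq with hn | rfl
  · filter_upwards [hHrec n hn] with ω hω
    exact hω ▸ le_max_left _ _
  · exact hHN.symm.le

theorem stmt8_general
    {Ω : Type*} {m0 : MeasurableSpace Ω} (μ : Measure Ω)
    (ℱ : Filtration ℕ m0) (N : ℕ)
    (G H M A ε : ℕ → Ω → ℝ)
    (hGint : ∀ n, n ≤ N → Integrable (G n) μ)
    -- `H` is the Snell envelope of `G`: it satisfies the backward dynamic programming
    -- recursion `H_N = G_N`, `H_n = max(G_n, E[H_{n+1} | F_n])`
    (hHint : ∀ n, n ≤ N → Integrable (H n) μ)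
    (hHN : H N =ᵐ[μ] G N)
    (hHrec : ∀ n, n < N → H n =ᵐ[μ] fun ω => max (G n ω) ((μ[H (n + 1) | ℱ n]) ω))
    -- Doob--Meyer decomposition `H_n = H_0 + M_n - A_n`
    (hM : Martingale M ℱ μ)
    (hAint : ∀ n, n ≤ N → Integrable (A n) μ)
    (hDM : ∀ n, n ≤ N → H n =ᵐ[μ] fun ω => H 0 ω + M n ω - A n ω)
    -- integrable noise
    (hεint : ∀ n, n ≤ N → Integrable (ε n) μ) :
    ∫ ω, H 0 ω ∂μ ≥
      (∫ ω, (Finset.range (N + 1)).sup' (Finset.nonempty_range_iff.mpr N.succ_ne_zero)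
          (fun n => G n ω - M n ω - ε n ω) ∂μ)
      + ∫ ω, (Finset.range (N + 1)).inf' (Finset.nonempty_range_iff.mpr N.succ_ne_zero)
          (fun n => A n ω + ε n ω) ∂μ := by
  set s := Finset.range (N + 1)
  have hne : s.Nonempty := Finset.nonempty_range_iff.mpr N.succ_ne_zero
  have hs : ∀ {n}, n ∈ s → n ≤ N := fun hn => Nat.lt_succ_iff.mp (Finset.mem_range.mp hn)
  have hsup := Integrable.finset_sup' hne (f := fun n ω => G n ω - M n ω - ε n ω)
    fun n hn => ((hGint n (hs hn)).sub (hM.integrable n)).sub (hεint n (hs hn))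
  have hinf := Integrable.finset_inf' hne (f := fun n ω => A n ω + ε n ω)
    fun n hn => (hAint n (hs hn)).add (hεint n (hs hn))
  have hbound : ∀ᵐ ω ∂μ, ∀ n ∈ s, G n ω - M n ω + A n ω ≤ H 0 ω := by
    refine (eventually_all_finset s).mpr fun n hn => ?_
    filter_upwards [ae_le_of_snell_recursion hHN hHrec (hs hn), hDM n (hs hn)] with ω hGH hH
    linarith
  rw [ge_iff_le, ← integral_add hsup hinf]
  refine integral_mono_ae (hsup.add hinf) (hHint 0 N.zero_le) ?_
  filter_upwards [hbound] with ω hω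
  refine (s.sup'_add_inf'_le_sup'_add hne _ _).trans (Finset.sup'_le _ _ fun n hn => ?_)
  simp only [Pi.add_apply]
  linarith [hω n hn]

theorem stmt8
    {Ω : Type*} {m0 : MeasurableSpace Ω} (μ : Measure Ω) [IsProbabilityMeasure μ]
    (ℱ : Filtration ℕ m0) (N : ℕ)
    (G H M A ε : ℕ → Ω → ℝ)
    (hGadpt : Adapted ℱ G) (hGint : ∀ n, n ≤ N → Integrable (G n) μ)
    -- `H` is the Snell envelope of `G`: it satisfies the backward dynamic programming
    -- recursion `H_N = G_N`, `H_n = max(G_n, E[H_{n+1} | F_n])`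
    (hHadpt : Adapted ℱ H) (hHint : ∀ n, n ≤ N → Integrable (H n) μ)
    (hHN : H N =ᵐ[μ] G N)
    (hHrec : ∀ n, n < N → H n =ᵐ[μ] fun ω => max (G n ω) ((μ[H (n + 1) | ℱ n]) ω))
    -- Doob--Meyer decomposition `H_n = H_0 + M_n - A_n`
    (hM : Martingale M ℱ μ) (hM0 : ∀ ω, M 0 ω = 0)
    (hAint : ∀ n, n ≤ N → Integrable (A n) μ)
    (hA0 : ∀ ω, A 0 ω = 0)
    (hAmono : ∀ᵐ ω ∂μ, ∀ n, n < N → A n ω ≤ A (n + 1) ω)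
    (hApred : ∀ n, StronglyMeasurable[ℱ n] (A (n + 1)))
    (hDM : ∀ n, n ≤ N → H n =ᵐ[μ] fun ω => H 0 ω + M n ω - A n ω)
    -- integrable noise
    (hεint : ∀ n, n ≤ N → Integrable (ε n) μ) :
    ∫ ω, H 0 ω ∂μ ≥
      (∫ ω, (Finset.range (N + 1)).sup' (Finset.nonempty_range_iff.mpr N.succ_ne_zero)
          (fun n => G n ω - M n ω - ε n ω) ∂μ)
      + ∫ ω, (Finset.range (N + 1)).inf' (Finset.nonempty_range_iff.mpr N.succ_ne_zero)
          (fun n => A n ω + ε n ω) ∂μ :=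
  stmt8_general μ ℱ N G H M A ε hGint hHint hHN hHrec hM hAint hDM hεint
end

section
/- Let $(\mathcal{F}_n)_{n=0}^N$ be a filtration, $(g(n,X_n))_{n=0}^N$ an integrable adapted process, and $(\varepsilon_n)_{n=0}^N$ integrable random variables with $\mathbb{E}[\varepsilon_n \mid \mathcal{F}_n] = 0$ for all $n$. Then for every $(\mathcal{F}_n)$-martingale $(M_n)_{n=0}^N$ with $M_0 = 0$, $\sup_{\tau \in \mathcal{T}} \mathbb{E}\, g(\tau, X_\tau) \le \mathbb{E}\big[\max_{0 \le n \le N}(g(n,X_n) - M_n - \varepsilon_n)\big]$, where $\mathcal{T}$ is the set of $(\mathcal{F}_n)$-stopping times valued in $\{0,\dots,N\}$. -/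
/-!
For a stopping time `τ ≤ N`, `g(τ) = (g - M - ε)(τ) + M_τ + ε_τ`. Optional stopping gives
`E M_τ = E M_0 = 0`, and `E ε_τ = ∑ₙ E[ε_n; τ = n] = 0` because `{τ = n} ∈ ℱ_n` and
`E[ε_n | ℱ_n] = 0`. Hence `E g(τ) = E (g - M - ε)(τ) ≤ E maxₙ (g - M - ε)(n)`.
-/

open MeasureTheory

namespace MeasureTheory

lemma integrable_finset_sup' {Ω ι β : Type*} {m0 : MeasurableSpace Ω} {μ : Measure Ω}
    [NormedAddCommGroup β] [Lattice β] [HasSolidNorm β] [IsOrderedAddMonoid β]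
    {s : Finset ι} (hs : s.Nonempty) {f : ι → Ω → β} (hf : ∀ i ∈ s, Integrable (f i) μ) :
    Integrable (fun ω => s.sup' hs (fun i => f i ω)) μ := by
  induction hs using Finset.Nonempty.cons_induction with
  | singleton i => simpa using hf i (Finset.mem_singleton_self i)
  | cons i t hit ht ih =>
    simp only [Finset.sup'_cons ht]
    exact (hf i (Finset.mem_cons_self i t)).sup (ih fun n hn => hf n (Finset.mem_cons_of_mem hn))

variable {Ω : Type*} {m0 : MeasurableSpace Ω} {μ : Measure Ω} {ℱ : Filtration ℕ m0}
  {τ : Ω → ℕ∞} {N : ℕ}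

lemma IsStoppingTime.measurableSet_eq_natCast (hτ : IsStoppingTime ℱ τ) (n : ℕ) :
    MeasurableSet[ℱ n] {ω | τ ω = n} :=
  hτ.measurableSet_eq n

lemma integrable_stoppedValue_of_le {E : Type*} [NormedAddCommGroup E] {u : ℕ → Ω → E}
    (hτ : IsStoppingTime ℱ τ) (hbdd : ∀ ω, τ ω ≤ N) (hu : ∀ n ≤ N, Integrable (u n) μ) :
    Integrable (stoppedValue u τ) μ := by
  rw [stoppedValue_eq hbdd]
  refine integrable_finsetSum' _ fun n hn => ?_
  exact (hu n (Finset.mem_range_succ_iff.mp hn)).indicator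
    (ℱ.le n _ (hτ.measurableSet_eq_natCast n))

lemma integral_stoppedValue_le_integral_sup' {u : ℕ → Ω → ℝ} (hτ : IsStoppingTime ℱ τ)
    (hbdd : ∀ ω, τ ω ≤ N) (hu : ∀ n ≤ N, Integrable (u n) μ) :
    ∫ ω, stoppedValue u τ ω ∂μ ≤
      ∫ ω, (Finset.range (N + 1)).sup' (Finset.nonempty_range_iff.mpr N.succ_ne_zero)
        (fun n => u n ω) ∂μ := by
  refine integral_mono (integrable_stoppedValue_of_le hτ hbdd hu)
    (integrable_finset_sup' _ fun n hn => hu n (Finset.mem_range_succ_iff.mp hn)) fun ω => ?_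
  exact Finset.le_sup' (fun n => u n ω)
    (Finset.mem_range_succ_iff.mpr (WithTop.untopA_le (hbdd ω)))

lemma integral_stoppedValue_eq_zero_of_condExp_eq_zero [SigmaFiniteFiltration μ ℱ]
    {E : Type*} [NormedAddCommGroup E] [NormedSpace ℝ E] [CompleteSpace E] {ε : ℕ → Ω → E}
    (hτ : IsStoppingTime ℱ τ) (hbdd : ∀ ω, τ ω ≤ N)
    (hε : ∀ n ≤ N, Integrable (ε n) μ) (hcond : ∀ n ≤ N, μ[ε n | ℱ n] =ᵐ[μ] 0) :
    ∫ ω, stoppedValue ε τ ω ∂μ = 0 := by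
  rw [stoppedValue_eq hbdd]
  simp only [Finset.sum_apply]
  rw [integral_finsetSum]
  · refine Finset.sum_eq_zero fun n hn => ?_
    have hnN := Finset.mem_range_succ_iff.mp hn
    have hmeas := hτ.measurableSet_eq_natCast n
    rw [integral_indicator (ℱ.le n _ hmeas), ← setIntegral_condExp (ℱ.le n) (hε n hnN) hmeas,
      setIntegral_congr_ae (ℱ.le n _ hmeas) ((hcond n hnN).mono fun _ h _ => h)]
    simp
  · exact fun n hn => (hε n (Finset.mem_range_succ_iff.mp hn)).indicator
      (ℱ.le n _ (hτ.measurableSet_eq_natCast n))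

lemma Martingale.integral_stoppedValue_eq [SigmaFiniteFiltration μ ℱ] {M : ℕ → Ω → ℝ}
    (hM : Martingale M ℱ μ) (hτ : IsStoppingTime ℱ τ) (hbdd : ∀ ω, τ ω ≤ N) :
    ∫ ω, stoppedValue M τ ω ∂μ = ∫ ω, M 0 ω ∂μ := by
  have h0 : IsStoppingTime ℱ (fun _ => ((0 : ℕ) : ℕ∞)) := isStoppingTime_const ℱ 0
  have hle : (fun _ => ((0 : ℕ) : ℕ∞)) ≤ τ := fun _ => zero_le
  have hsub : ∫ ω, M 0 ω ∂μ ≤ ∫ ω, stoppedValue M τ ω ∂μ :=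
    hM.submartingale.expected_stoppedValue_mono h0 hτ hle hbdd
  have hsup : ∫ ω, -M 0 ω ∂μ ≤ ∫ ω, -stoppedValue M τ ω ∂μ :=
    hM.neg.submartingale.expected_stoppedValue_mono h0 hτ hle hbdd
  rw [integral_neg, integral_neg, neg_le_neg_iff] at hsup
  exact le_antisymm hsup hsub

end MeasureTheory

theorem stmt9_general
    {Ω : Type*} {m0 : MeasurableSpace Ω} (μ : Measure Ω) [IsProbabilityMeasure μ]
    (ℱ : Filtration ℕ m0) (N : ℕ)
    (G ε M : ℕ → Ω → ℝ)
    (hGint : ∀ n, n ≤ N → Integrable (G n) μ)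
    (hεint : ∀ n, n ≤ N → Integrable (ε n) μ)
    (hεcond : ∀ n, n ≤ N → μ[ε n | ℱ n] =ᵐ[μ] 0)
    (hM : Martingale M ℱ μ) (hM0 : ∀ ω, M 0 ω = 0) :
    sSup ((fun τ : Ω → ℕ => ∫ ω, G (τ ω) ω ∂μ) ''
        {τ | IsStoppingTime ℱ (fun ω => (τ ω : WithTop ℕ)) ∧ ∀ ω, τ ω ≤ N})
      ≤ ∫ ω, (Finset.range (N + 1)).sup' (Finset.nonempty_range_iff.mpr N.succ_ne_zero)
          (fun n => G n ω - M n ω - ε n ω) ∂μ := by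
  refine csSup_le ⟨_, fun _ => 0, ⟨isStoppingTime_const ℱ 0, fun _ => N.zero_le⟩, rfl⟩ ?_
  rintro _ ⟨τ, ⟨hτ, hτN⟩, rfl⟩
  set σ : Ω → ℕ∞ := fun ω => τ ω
  have hσ : IsStoppingTime ℱ σ := hτ
  have hbdd : ∀ ω, σ ω ≤ N := fun ω => Nat.cast_le.mpr (hτN ω)
  have hGσ := integrable_stoppedValue_of_le hσ hbdd hGint
  have hMσ := integrable_stoppedValue_of_le hσ hbdd fun n _ => hM.integrable n
  have hεσ := integrable_stoppedValue_of_le hσ hbdd hεint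
  calc ∫ ω, stoppedValue G σ ω ∂μ
      = ∫ ω, (stoppedValue G σ - stoppedValue M σ - stoppedValue ε σ) ω ∂μ := by
        rw [integral_sub' (hGσ.sub hMσ) hεσ, integral_sub' hGσ hMσ,
          hM.integral_stoppedValue_eq hσ hbdd,
          integral_stoppedValue_eq_zero_of_condExp_eq_zero hσ hbdd hεint hεcond]
        simp [hM0]
    _ ≤ _ := integral_stoppedValue_le_integral_sup' hσ hbdd fun n hn =>
        ((hGint n hn).sub (hM.integrable n)).sub (hεint n hn)

theorem stmt9
    {Ω : Type*} {m0 : MeasurableSpace Ω} (μ : Measure Ω) [IsProbabilityMeasure μ]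
    (ℱ : Filtration ℕ m0) (N : ℕ)
    (G ε M : ℕ → Ω → ℝ)
    (hGadpt : Adapted ℱ G) (hGint : ∀ n, n ≤ N → Integrable (G n) μ)
    (hεint : ∀ n, n ≤ N → Integrable (ε n) μ)
    (hεcond : ∀ n, n ≤ N → μ[ε n | ℱ n] =ᵐ[μ] 0)
    (hM : Martingale M ℱ μ) (hM0 : ∀ ω, M 0 ω = 0) :
    sSup ((fun τ : Ω → ℕ => ∫ ω, G (τ ω) ω ∂μ) ''
        {τ | IsStoppingTime ℱ (fun ω => (τ ω : WithTop ℕ)) ∧ ∀ ω, τ ω ≤ N})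
      ≤ ∫ ω, (Finset.range (N + 1)).sup' (Finset.nonempty_range_iff.mpr N.succ_ne_zero)
          (fun n => G n ω - M n ω - ε n ω) ∂μ :=
  stmt9_general μ ℱ N G ε M hGint hεint hεcond hM hM0
end

section
/- Let $H \in (0,1) \setminus \{1/2\}$ and let $(W^H_t)_{t\ge 0}$ be a fractional Brownian motion with Hurst parameter $H$. Then there exists a stopping time $\tau$ with respect to the natural filtration of $W^H$ satisfying $0 \le \tau \le 1$ a.s. and $\mathbb{E}\, W^H_\tau > 0$; in particular, restricting to stopping times valued in $\{0, t_1\}$ with $t_1 \in (0,1]$ and $\tau = t_1\mathbf{1}_A$ for a suitable $A \in \mathcal{F}_0^{W^H}$ is insufficient, but two-step rules of the form $\tau = s\mathbf{1}_{\{W^H_s \le 0\}} + t\mathbf{1}_{\{W^H_s > 0\}}$ (for $H > 1/2$, $0 < s < t \le 1$) achieve $\mathbb{E}\, W^H_\tau = \mathbb{E}[(W^H_t - W^H_s)\mathbf{1}_{\{W^H_s > 0\}}] > 0$. -/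
/-!
For a centered Gaussian pair `(X, Y)` with `Var X > 0`,
`E[Y; X > 0] = E|N(0,1)| · Cov(X, Y) / (2 √(Var X))`. Indeed, convexity of `|·|` gives
`E|X + uY| ≥ E|X| + 2u E[Y; X > 0]` for every `u`, while `E|X + uY|` equals `E|N(0,1)|` times the
standard deviation of `X + uY`, which is differentiable at `u = 0`; so the two sides have the
same derivative there.

For fBM, `Cov(W_s, W_t - W_s) = (t^{2H} - s^{2H} - (t - s)^{2H}) / 2` has the sign of `H - 1/2`,
since `x ↦ x^{2H}` is strictly superadditive for `H > 1/2` and strictly subadditive for `H < 1/2`.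
As `E W_s = E W_t = 0`, stopping at `t` on `{W_s > 0}` and at `s` elsewhere yields
`E W_τ = E[W_t - W_s; W_s > 0]`, which is positive for `H > 1/2`; for `H < 1/2`, stopping at `s`
on `{W_s > 0}` and at `t` elsewhere yields its negative.
-/

open MeasureTheory ProbabilityTheory Filter Set
open scoped NNReal

/-- Covariance function of fractional Brownian motion with Hurst parameter `H`. -/
noncomputable def fbmCov (H : ℝ) (s t : ℝ≥0) : ℝ :=
  ((s : ℝ) ^ (2 * H) + (t : ℝ) ^ (2 * H) - |(s : ℝ) - (t : ℝ)| ^ (2 * H)) / 2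

namespace ProbabilityTheory

variable {Ω : Type*} {mΩ : MeasurableSpace Ω} {μ : Measure Ω} {X : Ω → ℝ} {m : ℝ} {v : ℝ≥0}

lemma integral_abs_gaussianReal (v : ℝ≥0) :
    ∫ x, |x| ∂gaussianReal 0 v = √(v : ℝ) * ∫ x, |x| ∂gaussianReal 0 1 := by
  have hmap : (gaussianReal 0 1).map (√(v : ℝ) * ·) = gaussianReal 0 v := by
    rw [gaussianReal_map_const_mul, mul_zero]
    congr 1
    ext
    simp [Real.sq_sqrt v.coe_nonneg]
  rw [← hmap, integral_map (by fun_prop) continuous_abs.aestronglyMeasurable]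
  simp only [abs_mul, abs_of_nonneg (Real.sqrt_nonneg _), integral_const_mul]

lemma integral_abs_gaussianReal_one_pos : 0 < ∫ x, |x| ∂gaussianReal 0 1 := by
  have := nullSingletonClass_gaussianReal (μ := 0) one_ne_zero
  have hsupp : Function.support (fun x : ℝ => |x|) = {0}ᶜ := by
    ext x
    simp
  rw [integral_pos_iff_support_of_nonneg (fun x => abs_nonneg x)
    ((memLp_id_gaussianReal 1).integrable le_rfl).abs, hsupp,
    measure_compl (measurableSet_singleton 0) (measure_ne_top _ _), measure_singleton]
  simp

lemma hasLaw_of_map_eq_gaussianReal (h : μ.map X = gaussianReal m v) :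
    HasLaw X (gaussianReal m v) μ :=
  ⟨.of_map_ne_zero (h ▸ IsProbabilityMeasure.ne_zero _), h⟩

lemma HasLaw.integrable_of_gaussianReal (hX : HasLaw X (gaussianReal m v) μ) : Integrable X μ :=
  (integrable_map_measure aestronglyMeasurable_id hX.aemeasurable).mp
    (hX.map_eq ▸ (memLp_id_gaussianReal 1).integrable le_rfl)

lemma HasLaw.integral_eq_of_gaussianReal (hX : HasLaw X (gaussianReal m v) μ) :
    ∫ ω, X ω ∂μ = m := by
  rw [hX.integral_eq, integral_id_gaussianReal]

lemma HasLaw.integral_abs_eq_of_gaussianReal (hX : HasLaw X (gaussianReal 0 v) μ) :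
    ∫ ω, |X ω| ∂μ = √(v : ℝ) * ∫ x, |x| ∂gaussianReal 0 1 := by
  rw [← integral_abs_gaussianReal, ← hX.integral_comp continuous_abs.aestronglyMeasurable]
  rfl

end ProbabilityTheory

section GaussianPair

variable {Ω : Type*} {mΩ : MeasurableSpace Ω} {μ : Measure Ω} {X Y : Ω → ℝ}

lemma abs_add_mul_ite_sub_le (a b u : ℝ) :
    |a| + u * (2 * (if 0 < a then b else 0) - b) ≤ |a + u * b| := by
  split_ifs with ha
  · rw [abs_of_pos ha]
    linarith [le_abs_self (a + u * b)]
  · rw [abs_of_nonpos (not_lt.mp ha)]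
    linarith [neg_abs_le (a + u * b)]

lemma integral_abs_add_mul_setIntegral_le (hX : Integrable X μ) (hY : Integrable Y μ) (u : ℝ) :
    ∫ ω, |X ω| ∂μ + u * (2 * ∫ ω in {ω | 0 < X ω}, Y ω ∂μ - ∫ ω, Y ω ∂μ)
      ≤ ∫ ω, |X ω + u * Y ω| ∂μ := by
  have hA : NullMeasurableSet {ω | 0 < X ω} μ :=
    nullMeasurableSet_lt aemeasurable_const hX.aemeasurable
  have hYA : Integrable (fun ω => 2 * {ω | 0 < X ω}.indicator Y ω) μ :=
    (hY.indicator₀ hA).const_mul 2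
  have hrhs : Integrable (fun ω => u * (2 * {ω | 0 < X ω}.indicator Y ω - Y ω)) μ :=
    (hYA.sub hY).const_mul u
  calc _ = ∫ ω, |X ω| + u * (2 * {ω | 0 < X ω}.indicator Y ω - Y ω) ∂μ := by
        rw [integral_add hX.abs hrhs, integral_const_mul, integral_sub hYA hY,
          integral_const_mul, integral_indicator₀ hA]
    _ ≤ _ := integral_mono (hX.abs.add hrhs) (hX.add (hY.const_mul u)).abs fun ω => by
        simpa only [Set.indicator_apply, Set.mem_ofPred_eq, Pi.add_apply] using
          abs_add_mul_ite_sub_le (X ω) (Y ω) u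

theorem setIntegral_pos_eq_of_gaussian_pair {vX c vY : ℝ} (hvX : 0 < vX)
    (hXY : ∀ a b : ℝ, μ.map (fun ω => a * X ω + b * Y ω) =
      gaussianReal 0 (a ^ 2 * vX + 2 * a * b * c + b ^ 2 * vY).toNNReal) :
    ∫ ω in {ω | 0 < X ω}, Y ω ∂μ = (∫ x, |x| ∂gaussianReal 0 1) * c / (2 * √vX) := by
  set m := ∫ x, |x| ∂gaussianReal 0 1
  set I := ∫ ω in {ω | 0 < X ω}, Y ω ∂μ
  set q : ℝ → ℝ := fun u => vX + 2 * u * c + u ^ 2 * vY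
  have hlaw : ∀ u, HasLaw (fun ω => X ω + u * Y ω) (gaussianReal 0 (q u).toNNReal) μ := by
    intro u
    simpa [q] using hasLaw_of_map_eq_gaussianReal (hXY 1 u)
  have hX : HasLaw X (gaussianReal 0 vX.toNNReal) μ := by simpa [q] using hlaw 0
  have hY : HasLaw Y (gaussianReal 0 vY.toNNReal) μ := by
    simpa using hasLaw_of_map_eq_gaussianReal (hXY 0 1)
  have habs : ∀ u, ∫ ω, |X ω + u * Y ω| ∂μ = √(q u) * m := fun u => by
    simpa only [Real.sqrt, Real.toNNReal_coe] using (hlaw u).integral_abs_eq_of_gaussianReal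
  have hmin : IsLocalMin (fun u => √(q u) * m - u * (2 * I)) 0 := by
    refine Eventually.of_forall fun u => ?_
    have := integral_abs_add_mul_setIntegral_le hX.integrable_of_gaussianReal
      hY.integrable_of_gaussianReal u
    rw [hY.integral_eq_of_gaussianReal] at this
    show √(q 0) * m - 0 * (2 * I) ≤ √(q u) * m - u * (2 * I)
    simp only [← habs, zero_mul, add_zero, sub_zero]
    linarith
  have hq : HasDerivAt q (2 * c) 0 := by
    simpa using ((((hasDerivAt_id (0 : ℝ)).const_mul 2).mul_const c).const_add vX).fun_add
      ((hasDerivAt_pow 2 (0 : ℝ)).mul_const vY)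
  have hderiv := ((hq.sqrt (by simpa [q] using hvX.ne')).mul_const m).sub
    ((hasDerivAt_id (0 : ℝ)).mul_const (2 * I))
  have := hmin.hasDerivAt_eq_zero hderiv
  have hsqrt : 0 < √vX := Real.sqrt_pos.mpr hvX
  norm_num [q] at this
  field_simp at this ⊢
  linarith

end GaussianPair

namespace Real

lemma add_rpow_lt_rpow_add {p x y : ℝ} (hp : 1 < p) (hx : 0 < x) (hy : 0 < y) :
    x ^ p + y ^ p < (x + y) ^ p := by
  have hxy : 0 < x + y := add_pos hx hy
  rw [← sub_add_cancel p 1, rpow_add_one hx.ne', rpow_add_one hy.ne',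
    rpow_add_one hxy.ne', mul_add]
  exact add_lt_add
    (mul_lt_mul_of_pos_right (rpow_lt_rpow hx.le (by linarith) (by linarith)) hx)
    (mul_lt_mul_of_pos_right (rpow_lt_rpow hy.le (by linarith) (by linarith)) hy)

lemma rpow_add_lt_add_rpow {p x y : ℝ} (hp : p < 1) (hx : 0 < x) (hy : 0 < y) :
    (x + y) ^ p < x ^ p + y ^ p := by
  have hxy : 0 < x + y := add_pos hx hy
  rw [← sub_add_cancel p 1, rpow_add_one hx.ne', rpow_add_one hy.ne',
    rpow_add_one hxy.ne', mul_add]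
  exact add_lt_add
    (mul_lt_mul_of_pos_right (rpow_lt_rpow_of_neg hx (by linarith) (by linarith)) hx)
    (mul_lt_mul_of_pos_right (rpow_lt_rpow_of_neg hy (by linarith) (by linarith)) hy)

end Real

section FBMCov

variable {H : ℝ} {s t : ℝ≥0}

lemma fbmCov_self (hH : 0 < H) (s : ℝ≥0) : fbmCov H s s = (s : ℝ) ^ (2 * H) := by
  simp only [fbmCov, sub_self, abs_zero, Real.zero_rpow (by positivity : 2 * H ≠ 0)]
  ring

lemma fbmCov_self_pos (hH : 0 < H) (hs : 0 < s) : 0 < fbmCov H s s := by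
  rw [fbmCov_self hH]
  exact Real.rpow_pos_of_pos hs _

lemma fbmCov_sub_fbmCov_self (hH : 0 < H) (hst : s ≤ t) :
    fbmCov H s t - fbmCov H s s
      = ((t : ℝ) ^ (2 * H) - (s : ℝ) ^ (2 * H) - ((t : ℝ) - s) ^ (2 * H)) / 2 := by
  rw [fbmCov_self hH, fbmCov, abs_sub_comm, abs_of_nonneg (sub_nonneg.2 (NNReal.coe_le_coe.2 hst))]
  ring

lemma fbmCov_self_lt_fbmCov (hH : 1 / 2 < H) (hs : 0 < s) (hst : s < t) :
    fbmCov H s s < fbmCov H s t := by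
  have h := Real.add_rpow_lt_rpow_add (p := 2 * H) (by linarith) (NNReal.coe_pos.2 hs)
    (sub_pos.2 (NNReal.coe_lt_coe.2 hst))
  rw [add_sub_cancel] at h
  linarith [fbmCov_sub_fbmCov_self (H := H) (by linarith) hst.le]

lemma fbmCov_lt_fbmCov_self (hH0 : 0 < H) (hH : H < 1 / 2) (hs : 0 < s) (hst : s < t) :
    fbmCov H s t < fbmCov H s s := by
  have h := Real.rpow_add_lt_add_rpow (p := 2 * H) (by linarith) (NNReal.coe_pos.2 hs)
    (sub_pos.2 (NNReal.coe_lt_coe.2 hst))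
  rw [add_sub_cancel] at h
  linarith [fbmCov_sub_fbmCov_self hH0 hst.le]

end FBMCov

section StoppingRule

variable {Ω : Type*} {mΩ : MeasurableSpace Ω} {μ : Measure Ω}

lemma integral_ite_pos_eq_setIntegral_sub_add {X f g : Ω → ℝ} (hX : AEMeasurable X μ)
    (hf : Integrable f μ) (hg : Integrable g μ) :
    ∫ ω, (if 0 < X ω then f ω else g ω) ∂μ
      = ∫ ω in {ω | 0 < X ω}, (f ω - g ω) ∂μ + ∫ ω, g ω ∂μ := by
  have hA : NullMeasurableSet {ω | 0 < X ω} μ := nullMeasurableSet_lt aemeasurable_const hX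
  have hite : ∀ ω, (if 0 < X ω then f ω else g ω)
      = {ω | 0 < X ω}.indicator (fun ω => f ω - g ω) ω + g ω := fun ω => by
    by_cases h : 0 < X ω <;> simp [h]
  have hfg : Integrable ({ω | 0 < X ω}.indicator (fun ω => f ω - g ω)) μ :=
    (hf.sub hg).indicator₀ hA
  rw [integral_congr_ae (Eventually.of_forall hite), integral_add hfg hg,
    integral_indicator₀ hA]

lemma isStoppingTime_ite_pos {W : ℝ≥0 → Ω → ℝ} (hW : ∀ t, StronglyMeasurable (W t))
    {s u v : ℝ≥0} (hsu : s ≤ u) (hsv : s ≤ v) :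
    IsStoppingTime (Filtration.natural W hW)
      (fun ω => ((if 0 < W s ω then u else v : ℝ≥0) : WithTop ℝ≥0)) := by
  have hA : MeasurableSet[Filtration.natural W hW s] {ω | 0 < W s ω} :=
    (Filtration.stronglyAdapted_natural hW s).measurable measurableSet_Ioi
  convert (isStoppingTime_const _ u).piecewise_of_le (i := s)
    (isStoppingTime_const _ v) (fun _ => WithTop.coe_le_coe.2 hsu)
    (fun _ => WithTop.coe_le_coe.2 hsv) hA using 1
  funext ω
  exact apply_ite _ _ _ _

end StoppingRule

section FBM

variable {Ω : Type*} {mΩ : MeasurableSpace Ω} {μ : Measure Ω}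

def HasFBMBivariateLaws (μ : Measure Ω) (H : ℝ) (W : ℝ≥0 → Ω → ℝ) : Prop :=
  ∀ s t : ℝ≥0, ∀ a b : ℝ, μ.map (fun ω => a * W s ω + b * W t ω) =
    gaussianReal 0 (a ^ 2 * fbmCov H s s + 2 * a * b * fbmCov H s t + b ^ 2 * fbmCov H t t).toNNReal

namespace HasFBMBivariateLaws

variable {H : ℝ} {W : ℝ≥0 → Ω → ℝ} {s t : ℝ≥0}

lemma hasLaw (hW : HasFBMBivariateLaws μ H W) (t : ℝ≥0) :
    HasLaw (W t) (gaussianReal 0 (fbmCov H t t).toNNReal) μ := by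
  simpa using hasLaw_of_map_eq_gaussianReal (hW t t 1 0)

lemma integral_apply_ite_pos (hW : HasFBMBivariateLaws μ H W) (s u v : ℝ≥0) :
    ∫ ω, W (if 0 < W s ω then u else v) ω ∂μ = ∫ ω in {ω | 0 < W s ω}, (W u ω - W v ω) ∂μ := by
  have hW_ite : ∀ ω, W (if 0 < W s ω then u else v) ω = if 0 < W s ω then W u ω else W v ω :=
    fun ω => apply_ite (W · ω) _ _ _
  rw [integral_congr_ae (Eventually.of_forall hW_ite),
    integral_ite_pos_eq_setIntegral_sub_add (hW.hasLaw s).aemeasurable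
      (hW.hasLaw u).integrable_of_gaussianReal (hW.hasLaw v).integrable_of_gaussianReal,
    (hW.hasLaw v).integral_eq_of_gaussianReal, add_zero]

lemma setIntegral_increment_eq (hW : HasFBMBivariateLaws μ H W) (hs : 0 < fbmCov H s s) :
    ∫ ω in {ω | 0 < W s ω}, (W t ω - W s ω) ∂μ
      = (∫ x, |x| ∂gaussianReal 0 1) * (fbmCov H s t - fbmCov H s s)
        / (2 * √(fbmCov H s s)) := by
  refine setIntegral_pos_eq_of_gaussian_pair
    (vY := fbmCov H s s - 2 * fbmCov H s t + fbmCov H t t) hs fun a b => ?_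
  have h := hW s t (a - b) b
  convert h using 2
  · funext ω
    ring
  · ring_nf

lemma setIntegral_increment_pos (hW : HasFBMBivariateLaws μ H W) (hH : 1 / 2 < H) (hs : 0 < s)
    (hst : s < t) :
    0 < ∫ ω in {ω | 0 < W s ω}, (W t ω - W s ω) ∂μ := by
  have hss := fbmCov_self_pos (by linarith) hs
  rw [hW.setIntegral_increment_eq hss]
  exact div_pos (mul_pos integral_abs_gaussianReal_one_pos
    (sub_pos.2 (fbmCov_self_lt_fbmCov hH hs hst))) (by positivity)

lemma setIntegral_increment_neg (hW : HasFBMBivariateLaws μ H W) (hH0 : 0 < H) (hH : H < 1 / 2)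
    (hs : 0 < s) (hst : s < t) :
    ∫ ω in {ω | 0 < W s ω}, (W t ω - W s ω) ∂μ < 0 := by
  have hss := fbmCov_self_pos hH0 hs
  rw [hW.setIntegral_increment_eq hss]
  exact div_neg_of_neg_of_pos (mul_neg_of_pos_of_neg integral_abs_gaussianReal_one_pos
    (sub_neg.2 (fbmCov_lt_fbmCov_self hH0 hH hs hst))) (by positivity)

end HasFBMBivariateLaws

end FBM

theorem stmt16_general
    {Ω : Type*} {m0 : MeasurableSpace Ω} (μ : Measure Ω)
    (H : ℝ) (hH0 : 0 < H) (hH : H ≠ 1 / 2)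
    (W : ℝ≥0 → Ω → ℝ) (hW : ∀ t, StronglyMeasurable (W t))
    -- `W` is a centered Gaussian process with the fBM covariance structure:
    -- every linear combination of two coordinates is a centered Gaussian
    (hjoint : ∀ s t : ℝ≥0, ∀ a b : ℝ,
      Measure.map (fun ω => a * W s ω + b * W t ω) μ =
        ProbabilityTheory.gaussianReal 0
          (Real.toNNReal (a ^ 2 * fbmCov H s s + 2 * a * b * fbmCov H s t
            + b ^ 2 * fbmCov H t t))) :
    (∃ τ : Ω → ℝ≥0,
      IsStoppingTime (MeasureTheory.Filtration.natural W hW) (fun ω => (τ ω : WithTop ℝ≥0)) ∧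
      (∀ ω, τ ω ≤ 1) ∧
      0 < ∫ ω, W (τ ω) ω ∂μ) ∧
    (1 / 2 < H → ∀ s t : ℝ≥0, 0 < s → s < t → t ≤ 1 →
      (∫ ω, W (if 0 < W s ω then t else s) ω ∂μ
          = ∫ ω in {ω | 0 < W s ω}, (W t ω - W s ω) ∂μ) ∧
      0 < ∫ ω in {ω | 0 < W s ω}, (W t ω - W s ω) ∂μ) := by
  have hlaws : HasFBMBivariateLaws μ H W := hjoint
  refine ⟨?_, fun hH' s t hs hst _ =>
    ⟨hlaws.integral_apply_ite_pos s t s, hlaws.setIntegral_increment_pos hH' hs hst⟩⟩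
  have h0 : (0 : ℝ≥0) < 1 / 2 := by norm_num
  have h1 : (1 / 2 : ℝ≥0) < 1 := by norm_num
  rcases hH.lt_or_gt with hlt | hgt
  · refine ⟨fun ω => if 0 < W (1 / 2) ω then 1 / 2 else 1, isStoppingTime_ite_pos hW le_rfl h1.le,
      fun ω => by dsimp only; split_ifs <;> norm_num, ?_⟩
    rw [hlaws.integral_apply_ite_pos]
    have h := neg_pos.2 (hlaws.setIntegral_increment_neg hH0 hlt h0 h1)
    simpa only [← integral_neg, neg_sub] using h
  · refine ⟨fun ω => if 0 < W (1 / 2) ω then 1 else 1 / 2, isStoppingTime_ite_pos hW h1.le le_rfl,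
      fun ω => by dsimp only; split_ifs <;> norm_num, ?_⟩
    rw [hlaws.integral_apply_ite_pos]
    exact hlaws.setIntegral_increment_pos hgt h0 h1

theorem stmt16
    {Ω : Type*} {m0 : MeasurableSpace Ω} (μ : Measure Ω) [IsProbabilityMeasure μ]
    (H : ℝ) (hH0 : 0 < H) (hH1 : H < 1) (hH : H ≠ 1 / 2)
    (W : ℝ≥0 → Ω → ℝ) (hW : ∀ t, StronglyMeasurable (W t))
    -- `W` is a centered Gaussian process with the fBM covariance structure:
    -- every linear combination of two coordinates is a centered Gaussian
    (hjoint : ∀ s t : ℝ≥0, ∀ a b : ℝ,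
      Measure.map (fun ω => a * W s ω + b * W t ω) μ =
        ProbabilityTheory.gaussianReal 0
          (Real.toNNReal (a ^ 2 * fbmCov H s s + 2 * a * b * fbmCov H s t
            + b ^ 2 * fbmCov H t t))) :
    (∃ τ : Ω → ℝ≥0,
      IsStoppingTime (MeasureTheory.Filtration.natural W hW) (fun ω => (τ ω : WithTop ℝ≥0)) ∧
      (∀ ω, τ ω ≤ 1) ∧
      0 < ∫ ω, W (τ ω) ω ∂μ) ∧
    (1 / 2 < H → ∀ s t : ℝ≥0, 0 < s → s < t → t ≤ 1 →
      (∫ ω, W (if 0 < W s ω then t else s) ω ∂μ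
          = ∫ ω in {ω | 0 < W s ω}, (W t ω - W s ω) ∂μ) ∧
      0 < ∫ ω in {ω | 0 < W s ω}, (W t ω - W s ω) ∂μ) :=
  stmt16_general (m0 := m0) μ H hH0 hH W hW hjoint
end

section
/- Let $X = (X_n)_{n=0}^N$ be adapted to $(\mathcal{F}_n)$ with $g(n, X_n)$ integrable for all $n$, and let $\tau_{n+1} \in \mathcal{T}_{n+1}$ be any stopping time. Define $f_n(x) = \mathbf{1}_{\{g(n,x) \ge h_n(x)\}}$ where $h_n(X_n)$ is a version of $\mathbb{E}[g(\tau_{n+1}, X_{\tau_{n+1}}) \mid X_n]$ and this conditional expectation also equals $\mathbb{E}[g(\tau_{n+1}, X_{\tau_{n+1}}) \mid \mathcal{F}_n]$ a.s. Then the stopping time $\tau_n = n\mathbf{1}_{\{f_n(X_n)=1\}} + \tau_{n+1}\mathbf{1}_{\{f_n(X_n)=0\}}$ satisfies $\mathbb{E}\, g(\tau_n, X_{\tau_n}) = \mathbb{E}[\max(g(n,X_n), h_n(X_n))] \ge \mathbb{E}\, g(\tau, X_\tau)$ for every stopping time $\tau \in \mathcal{T}_n$ of the form $\tau = n\mathbf{1}_E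 + \tau_{n+1}\mathbf{1}_{E^c}$ with $E \in \mathcal{F}_n$. -/
/-! On `E ∈ ℱ n` the rule stops at `n`, and on `Eᶜ ∈ ℱ n` the payoff `g(τ₁, X_{τ₁})` may be
replaced by its `ℱ n`-conditional expectation `h(X_n)` without changing the integral. So every
one-step modification of `τ₁` has expected payoff `∫ E.piecewise (g(n, X_n)) (h(X_n))`, which is
pointwise at most `max (g(n, X_n)) (h(X_n))`, with equality for `E = {h(X_n) ≤ g(n, X_n)}`. -/

open MeasureTheory Filter Set Classical

section Piecewise

variable {Ω : Type*} {m m0 : MeasurableSpace Ω} {μ : Measure Ω} {E : Set Ω} {F G H : Ω → ℝ}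

theorem integral_piecewise_congr_condExp (hm : m ≤ m0) [SigmaFinite (μ.trim hm)]
    (hE : MeasurableSet[m] E) (hF : Integrable F μ) (hG : Integrable G μ)
    (hH : H =ᵐ[μ] μ[G | m]) :
    ∫ ω, E.piecewise F G ω ∂μ = ∫ ω, E.piecewise F H ω ∂μ := by
  have hHint : Integrable H μ := integrable_condExp.congr hH.symm
  have hEc : MeasurableSet Eᶜ := hm _ hE.compl
  rw [integral_piecewise (hm _ hE) hF.integrableOn hG.integrableOn,
    integral_piecewise (hm _ hE) hF.integrableOn hHint.integrableOn]
  congr 1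
  calc ∫ ω in Eᶜ, G ω ∂μ = ∫ ω in Eᶜ, μ[G | m] ω ∂μ := (setIntegral_condExp hm hG hE.compl).symm
    _ = ∫ ω in Eᶜ, H ω ∂μ := setIntegral_congr_ae hEc (hH.mono fun _ hω _ => hω.symm)

theorem integral_piecewise_le_integral_max (hE : MeasurableSet E) (hF : Integrable F μ)
    (hH : Integrable H μ) :
    ∫ ω, E.piecewise F H ω ∂μ ≤ ∫ ω, max (F ω) (H ω) ∂μ := by
  refine integral_mono (Integrable.piecewise hE hF.integrableOn hH.integrableOn) (hF.sup hH) fun ω => ?_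
  by_cases hω : ω ∈ E <;> simp [hω]

theorem piecewise_setOf_le_eq_max :
    {ω | H ω ≤ F ω}.piecewise F H = fun ω => max (F ω) (H ω) := by
  ext ω
  simp [Set.piecewise, max_def']

theorem ite_mem_apply_eq_piecewise (Y : ℕ → Ω → ℝ) (n : ℕ) (τ : Ω → ℕ) :
    (fun ω => Y (if ω ∈ E then n else τ ω) ω) = E.piecewise (Y n) fun ω => Y (τ ω) ω := by
  ext ω
  by_cases hω : ω ∈ E <;> simp [hω]

end Piecewise

theorem stmt17_general
    {Ω : Type*} {m0 : MeasurableSpace Ω} (μ : Measure Ω) [IsProbabilityMeasure μ]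
    (ℱ : Filtration ℕ m0) (d N n : ℕ) (hn : n < N)
    (X : ℕ → Ω → (Fin d → ℝ)) (hXadpt : ∀ m, StronglyMeasurable[ℱ m] (X m))
    (g : ℕ → (Fin d → ℝ) → ℝ) (hg : ∀ m, Measurable (g m))
    (hgint : ∀ m, m ≤ N → Integrable (fun ω => g m (X m ω)) μ)
    (τ1 : Ω → ℕ)
    (hτ1int : Integrable (fun ω => g (τ1 ω) (X (τ1 ω) ω)) μ)
    (h : (Fin d → ℝ) → ℝ) (hh : Measurable h)
    (hhF : (fun ω => h (X n ω)) =ᵐ[μ]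
      μ[(fun ω => g (τ1 ω) (X (τ1 ω) ω)) | ℱ n])
    (τn : Ω → ℕ)
    (hτn : ∀ ω, τn ω = if h (X n ω) ≤ g n (X n ω) then n else τ1 ω) :
    ∫ ω, g (τn ω) (X (τn ω) ω) ∂μ = ∫ ω, max (g n (X n ω)) (h (X n ω)) ∂μ ∧
    ∀ E : Set Ω, MeasurableSet[ℱ n] E →
      ∫ ω, g ((fun ω' => if ω' ∈ E then n else τ1 ω') ω) (X ((fun ω' => if ω' ∈ E then n else τ1 ω') ω) ω) ∂μ
        ≤ ∫ ω, g (τn ω) (X (τn ω) ω) ∂μ := by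
  have hgn : Integrable (fun ω => g n (X n ω)) μ := hgint n hn.le
  have payoff : ∀ E : Set Ω, MeasurableSet[ℱ n] E →
      ∫ ω, g (if ω ∈ E then n else τ1 ω) (X (if ω ∈ E then n else τ1 ω) ω) ∂μ
        = ∫ ω, E.piecewise (fun ω => g n (X n ω)) (fun ω => h (X n ω)) ω ∂μ := fun E hE => by
    rw [ite_mem_apply_eq_piecewise (fun m ω => g m (X m ω))]
    exact integral_piecewise_congr_condExp (ℱ.le n) hE hgn hτ1int hhF
  set E₀ : Set Ω := {ω | h (X n ω) ≤ g n (X n ω)}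
  have hE₀ : MeasurableSet[ℱ n] E₀ :=
    measurableSet_le (hh.comp (hXadpt n).measurable) ((hg n).comp (hXadpt n).measurable)
  have hτn_eq : τn = fun ω => if ω ∈ E₀ then n else τ1 ω := funext hτn
  have optimal : ∫ ω, g (τn ω) (X (τn ω) ω) ∂μ = ∫ ω, max (g n (X n ω)) (h (X n ω)) ∂μ := by
    rw [hτn_eq, payoff E₀ hE₀, piecewise_setOf_le_eq_max]
  refine ⟨optimal, fun E hE => ?_⟩
  rw [optimal, payoff E hE]
  exact integral_piecewise_le_integral_max (ℱ.le n E hE) hgn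
    (integrable_condExp.congr hhF.symm)

theorem stmt17
    {Ω : Type*} {m0 : MeasurableSpace Ω} (μ : Measure Ω) [IsProbabilityMeasure μ]
    (ℱ : Filtration ℕ m0) (d N n : ℕ) (hn : n < N)
    (X : ℕ → Ω → (Fin d → ℝ)) (hXadpt : ∀ m, StronglyMeasurable[ℱ m] (X m))
    (g : ℕ → (Fin d → ℝ) → ℝ) (hg : ∀ m, Measurable (g m))
    (hgint : ∀ m, m ≤ N → Integrable (fun ω => g m (X m ω)) μ)
    (τ1 : Ω → ℕ) (hτ1 : IsStoppingTime ℱ (fun ω => (τ1 ω : WithTop ℕ)))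
    (hτ1r : ∀ ω, τ1 ω ∈ Finset.Icc (n + 1) N)
    (hτ1int : Integrable (fun ω => g (τ1 ω) (X (τ1 ω) ω)) μ)
    (h : (Fin d → ℝ) → ℝ) (hh : Measurable h)
    -- `h(X_n)` is a version of the continuation value, both as a conditional
    -- expectation given `X_n` and given `F_n`
    (hhX : (fun ω => h (X n ω)) =ᵐ[μ]
      μ[(fun ω => g (τ1 ω) (X (τ1 ω) ω)) | MeasurableSpace.comap (X n) inferInstance])
    (hhF : (fun ω => h (X n ω)) =ᵐ[μ]
      μ[(fun ω => g (τ1 ω) (X (τ1 ω) ω)) | ℱ n])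
    (τn : Ω → ℕ)
    (hτn : ∀ ω, τn ω = if h (X n ω) ≤ g n (X n ω) then n else τ1 ω) :
    ∫ ω, g (τn ω) (X (τn ω) ω) ∂μ = ∫ ω, max (g n (X n ω)) (h (X n ω)) ∂μ ∧
    ∀ E : Set Ω, MeasurableSet[ℱ n] E →
      ∫ ω, g ((fun ω' => if ω' ∈ E then n else τ1 ω') ω) (X ((fun ω' => if ω' ∈ E then n else τ1 ω') ω) ω) ∂μ
        ≤ ∫ ω, g (τn ω) (X (τn ω) ω) ∂μ :=
  stmt17_general μ ℱ d N n hn X hXadpt g hg hgint τ1 hτ1int h hh hhF τn hτn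
end

section
/- Let $H_n = \operatorname{ess\,sup}_{\tau \in \mathcal{T}_n} \mathbb{E}[g(\tau, X_\tau) \mid \mathcal{F}_n]$ be the Snell envelope of an integrable adapted process $(g(n,X_n))_{n=0}^N$, with Doob decomposition $H_n = H_0 + M^H_n - A^H_n$. If $(M_n, \varepsilon_n) = (M^H_n, 0)$, then the dual upper bound is tight: $\mathbb{E}\big[\max_{0 \le n \le N}(g(n,X_n) - M^H_n)\big] = H_0 = \sup_{\tau \in \mathcal{T}}\mathbb{E}\, g(\tau, X_\tau)$. -/
/-!
Pathwise, the Doob decomposition gives `G n - M n ≤ H n - M n = H 0 - A n ≤ H 0`. Before the first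
time `τ` at which `H` touches `G`, the envelope equals its continuation value
`H 0 + M n - A (n + 1)`, so `A` does not move and `A τ = A 0 = 0`; hence `G τ - M τ = H 0` and
`max_n (G n - M n) = H 0` almost surely. Since `τ` is a stopping time and a stopped martingale
started at `0` has mean zero, `E[G τ] = E[H 0]`, while `E[G σ] ≤ E[H 0 + M σ] = E[H 0]` for every
bounded stopping time `σ`.
-/

open MeasureTheory Filter Set

structure IsSnellDoobPath (N : ℕ) (g h m a : ℕ → ℝ) : Prop where
  terminal : h N = g N
  -- `h 0 + m n - a (n + 1)` is the continuation value `E[h (n + 1) | F n]` seen along the path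
  recursion : ∀ n < N, h n = max (g n) (h 0 + m n - a (n + 1))
  doob : ∀ n ≤ N, h n = h 0 + m n - a n
  compensator_zero : a 0 = 0
  compensator_mono : ∀ n < N, a n ≤ a (n + 1)

namespace IsSnellDoobPath

variable {N : ℕ} {g h m a : ℕ → ℝ}

theorem le_envelope (hp : IsSnellDoobPath N g h m a) {n : ℕ} (hn : n ≤ N) : g n ≤ h n := by
  rcases hn.lt_or_eq with hlt | rfl
  · exact hp.recursion n hlt ▸ le_max_left _ _
  · exact hp.terminal.ge

theorem compensator_nonneg (hp : IsSnellDoobPath N g h m a) {n : ℕ} (hn : n ≤ N) : 0 ≤ a n := by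
  induction n with
  | zero => exact hp.compensator_zero.ge
  | succ k ih => exact (ih (by omega)).trans (hp.compensator_mono k hn)

theorem sub_le (hp : IsSnellDoobPath N g h m a) {n : ℕ} (hn : n ≤ N) : g n - m n ≤ h 0 := by
  linarith [hp.le_envelope hn, hp.doob n hn, hp.compensator_nonneg hn]

theorem compensator_eq_zero (hp : IsSnellDoobPath N g h m a) {τ : ℕ} (hτN : τ ≤ N)
    (hbefore : ∀ k < τ, h k ≠ g k) {k : ℕ} (hk : k ≤ τ) : a k = 0 := by
  induction k with
  | zero => exact hp.compensator_zero
  | succ k ih =>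
    have hkN : k < N := by omega
    have hcont : h k = h 0 + m k - a (k + 1) := by
      rcases max_choice (g k) (h 0 + m k - a (k + 1)) with hg | hc
      · exact absurd ((hp.recursion k hkN).trans hg) (hbefore k hk)
      · exact (hp.recursion k hkN).trans hc
    linarith [hp.doob k hkN.le, ih (by omega)]

theorem sub_eq (hp : IsSnellDoobPath N g h m a) {τ : ℕ} (hτN : τ ≤ N) (hτ : h τ = g τ)
    (hbefore : ∀ k < τ, h k ≠ g k) : g τ - m τ = h 0 := by
  linarith [hp.doob τ hτN, hp.compensator_eq_zero hτN hbefore le_rfl]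

theorem sup'_sub_eq (hp : IsSnellDoobPath N g h m a) :
    (Finset.range (N + 1)).sup' (Finset.nonempty_range_iff.mpr N.succ_ne_zero)
      (fun n => g n - m n) = h 0 := by
  classical
  have hex : ∃ n, h n = g n := ⟨N, hp.terminal⟩
  have hτN : Nat.find hex ≤ N := Nat.find_min' hex hp.terminal
  refine le_antisymm
    (Finset.sup'_le _ _ fun n hn => hp.sub_le (Finset.mem_range_succ_iff.mp hn)) ?_
  rw [← hp.sub_eq hτN (Nat.find_spec hex) fun k hk => Nat.find_min hex hk]
  exact Finset.le_sup' (fun n => g n - m n) (Finset.mem_range_succ_iff.mpr hτN)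

end IsSnellDoobPath

namespace MeasureTheory

variable {Ω E : Type*} {m0 : MeasurableSpace Ω} {μ : Measure Ω} {ℱ : Filtration ℕ m0}

theorem integrable_comp_stoppingTime [NormedAddCommGroup E] {u : ℕ → Ω → E} {τ : Ω → ℕ} {N : ℕ}
    (hτ : IsStoppingTime ℱ (fun ω => (τ ω : WithTop ℕ))) (hτN : ∀ ω, τ ω ≤ N)
    (hu : ∀ n ≤ N, Integrable (u n) μ) : Integrable (fun ω => u (τ ω) ω) μ := by
  refine (integrable_stoppedValue ℕ hτ (u := fun n => u (min n N))
    (fun n => hu _ (min_le_right n N)) (N := N) fun ω => WithTop.coe_le_coe.mpr (hτN ω)).congr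
    (ae_of_all _ fun ω => ?_)
  show u (min (τ ω) N) ω = u (τ ω) ω
  rw [min_eq_left (hτN ω)]

theorem Martingale.integral_comp_stoppingTime [SigmaFiniteFiltration μ ℱ] {M : ℕ → Ω → ℝ}
    (hM : Martingale M ℱ μ) {τ : Ω → ℕ} (hτ : IsStoppingTime ℱ (fun ω => (τ ω : WithTop ℕ))) {N : ℕ}
    (hτN : ∀ ω, τ ω ≤ N) : ∫ ω, M (τ ω) ω ∂μ = ∫ ω, M 0 ω ∂μ := by
  have hmono {X : ℕ → Ω → ℝ} (hX : Submartingale X ℱ μ) :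
      ∫ ω, X 0 ω ∂μ ≤ ∫ ω, X (τ ω) ω ∂μ :=
    hX.expected_stoppedValue_mono (isStoppingTime_const ℱ 0) hτ
      (fun ω => WithTop.coe_le_coe.mpr (Nat.zero_le (τ ω))) fun ω => WithTop.coe_le_coe.mpr (hτN ω)
  have hneg := hmono hM.neg.submartingale
  simp only [Pi.neg_apply, integral_neg, neg_le_neg_iff] at hneg
  exact le_antisymm hneg (hmono hM.submartingale)

theorem Martingale.integral_add_comp_stoppingTime [SigmaFiniteFiltration μ ℱ]
    {M : ℕ → Ω → ℝ} (hM : Martingale M ℱ μ) (hM0 : ∀ ω, M 0 ω = 0) {X : Ω → ℝ}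
    (hX : Integrable X μ) {τ : Ω → ℕ} (hτ : IsStoppingTime ℱ (fun ω => (τ ω : WithTop ℕ)))
    {N : ℕ} (hτN : ∀ ω, τ ω ≤ N) : ∫ ω, X ω + M (τ ω) ω ∂μ = ∫ ω, X ω ∂μ := by
  rw [integral_add hX (integrable_comp_stoppingTime hτ hτN fun n _ => hM.integrable n),
    hM.integral_comp_stoppingTime hτ hτN]
  simp [hM0]

theorem integral_comp_stoppingTime_le_of_le_add_martingale [SigmaFiniteFiltration μ ℱ]
    {G M : ℕ → Ω → ℝ} {X : Ω → ℝ} {N : ℕ} (hM : Martingale M ℱ μ) (hM0 : ∀ ω, M 0 ω = 0)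
    (hX : Integrable X μ) (hG : ∀ n ≤ N, Integrable (G n) μ)
    (hle : ∀ᵐ ω ∂μ, ∀ n ≤ N, G n ω ≤ X ω + M n ω) {τ : Ω → ℕ}
    (hτ : IsStoppingTime ℱ (fun ω => (τ ω : WithTop ℕ))) (hτN : ∀ ω, τ ω ≤ N) :
    ∫ ω, G (τ ω) ω ∂μ ≤ ∫ ω, X ω ∂μ := by
  rw [← hM.integral_add_comp_stoppingTime hM0 hX hτ hτN]
  exact integral_mono_ae (integrable_comp_stoppingTime hτ hτN hG)
    (hX.add (integrable_comp_stoppingTime hτ hτN fun n _ => hM.integrable n))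
    (hle.mono fun ω hω => hω (τ ω) (hτN ω))

theorem condExp_succ_ae_eq_of_doob [SigmaFiniteFiltration μ ℱ] {H M A : ℕ → Ω → ℝ} {n : ℕ}
    (hH0 : StronglyMeasurable[ℱ n] (H 0)) (hH0int : Integrable (H 0) μ) (hM : Martingale M ℱ μ)
    (hA : StronglyMeasurable[ℱ n] (A (n + 1))) (hAint : Integrable (A (n + 1)) μ)
    (hdoob : H (n + 1) =ᵐ[μ] fun ω => H 0 ω + M (n + 1) ω - A (n + 1) ω) :
    μ[H (n + 1)|ℱ n] =ᵐ[μ] fun ω => H 0 ω + M n ω - A (n + 1) ω := by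
  have hsplit : H (n + 1) =ᵐ[μ] (H 0 - A (n + 1)) + M (n + 1) :=
    hdoob.trans (ae_of_all _ fun ω => by simp only [Pi.add_apply, Pi.sub_apply]; ring)
  calc μ[H (n + 1)|ℱ n] =ᵐ[μ] μ[H 0 - A (n + 1)|ℱ n] + μ[M (n + 1)|ℱ n] :=
        (condExp_congr_ae hsplit).trans (condExp_add (hH0int.sub hAint) (hM.integrable _) _)
    _ =ᵐ[μ] (H 0 - A (n + 1)) + M n := by
        rw [condExp_of_stronglyMeasurable (ℱ.le n) (hH0.sub hA) (hH0int.sub hAint)]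
        exact EventuallyEq.rfl.add (hM.condExp_ae_eq n.le_succ)
    _ =ᵐ[μ] fun ω => H 0 ω + M n ω - A (n + 1) ω :=
        ae_of_all _ fun ω => by simp only [Pi.add_apply, Pi.sub_apply]; ring

theorem ae_isSnellDoobPath [SigmaFiniteFiltration μ ℱ] {G H M A : ℕ → Ω → ℝ} {N : ℕ}
    (hH0 : Measurable[ℱ 0] (H 0)) (hH0int : Integrable (H 0) μ) (hHN : H N =ᵐ[μ] G N)
    (hHrec : ∀ n < N, H n =ᵐ[μ] fun ω => max (G n ω) ((μ[H (n + 1)|ℱ n]) ω))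
    (hM : Martingale M ℱ μ) (hAint : ∀ n ≤ N, Integrable (A n) μ) (hA0 : ∀ ω, A 0 ω = 0)
    (hAmono : ∀ᵐ ω ∂μ, ∀ n < N, A n ω ≤ A (n + 1) ω)
    (hApred : ∀ n, StronglyMeasurable[ℱ n] (A (n + 1)))
    (hDM : ∀ n ≤ N, H n =ᵐ[μ] fun ω => H 0 ω + M n ω - A n ω) :
    ∀ᵐ ω ∂μ, IsSnellDoobPath N (G · ω) (H · ω) (M · ω) (A · ω) := by
  have hrec : ∀ᵐ ω ∂μ, ∀ n < N, H n ω = max (G n ω) (H 0 ω + M n ω - A (n + 1) ω) := by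
    refine ae_all_iff.2 fun n => eventually_imp_distrib_left.2 fun hn => ?_
    have hcont := condExp_succ_ae_eq_of_doob
      (hH0.mono (ℱ.mono n.zero_le) le_rfl).stronglyMeasurable hH0int hM (hApred n) (hAint _ hn)
      (hDM _ hn)
    filter_upwards [hHrec n hn, hcont] with ω hrec hcont
    rw [hrec, hcont]
  have hdoob : ∀ᵐ ω ∂μ, ∀ n ≤ N, H n ω = H 0 ω + M n ω - A n ω :=
    ae_all_iff.2 fun n => eventually_imp_distrib_left.2 (hDM n)
  filter_upwards [hHN, hrec, hdoob, hAmono] with ω hN hrec hdoob hmono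
  exact ⟨hN, hrec, hdoob, hA0 ω, hmono⟩

end MeasureTheory

theorem stmt19
    {Ω : Type*} {m0 : MeasurableSpace Ω} (μ : Measure Ω) [IsProbabilityMeasure μ]
    (ℱ : Filtration ℕ m0) (N : ℕ)
    (G H M A : ℕ → Ω → ℝ)
    (hGadpt : Adapted ℱ G) (hGint : ∀ n, n ≤ N → Integrable (G n) μ)
    -- `H` is the Snell envelope of `G`: backward dynamic programming recursion
    (hHadpt : Adapted ℱ H) (hHint : ∀ n, n ≤ N → Integrable (H n) μ)
    (hHN : H N =ᵐ[μ] G N)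
    (hHrec : ∀ n, n < N → H n =ᵐ[μ] fun ω => max (G n ω) ((μ[H (n + 1) | ℱ n]) ω))
    -- Doob decomposition `H_n = H_0 + M_n - A_n` with `M` martingale and `A`
    -- predictable, nonnegative and nondecreasing
    (hM : Martingale M ℱ μ) (hM0 : ∀ ω, M 0 ω = 0)
    (hAint : ∀ n, n ≤ N → Integrable (A n) μ)
    (hA0 : ∀ ω, A 0 ω = 0)
    (hAmono : ∀ᵐ ω ∂μ, ∀ n, n < N → A n ω ≤ A (n + 1) ω)
    (hApred : ∀ n, StronglyMeasurable[ℱ n] (A (n + 1)))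
    (hDM : ∀ n, n ≤ N → H n =ᵐ[μ] fun ω => H 0 ω + M n ω - A n ω) :
    (∫ ω, (Finset.range (N + 1)).sup' (Finset.nonempty_range_iff.mpr N.succ_ne_zero)
        (fun n => G n ω - M n ω) ∂μ) = ∫ ω, H 0 ω ∂μ ∧
    ∫ ω, H 0 ω ∂μ = sSup ((fun τ : Ω → ℕ => ∫ ω, G (τ ω) ω ∂μ) ''
        {τ | IsStoppingTime ℱ (fun ω => (τ ω : WithTop ℕ)) ∧ ∀ ω, τ ω ≤ N}) := by
  have hH0int := hHint 0 N.zero_le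
  have hpath := ae_isSnellDoobPath (hHadpt 0) hH0int hHN hHrec hM hAint hA0 hAmono hApred hDM
  set τ : Ω → ℕ := hittingBtwn (H - G) {0} 0 N
  have hτ : IsStoppingTime ℱ (fun ω => (τ ω : WithTop ℕ)) :=
    (hHadpt.sub hGadpt).isStoppingTime_hittingBtwn (measurableSet_singleton 0)
  have hτN : ∀ ω, τ ω ≤ N := hittingBtwn_le
  have hGτ : (fun ω => G (τ ω) ω) =ᵐ[μ] fun ω => H 0 ω + M (τ ω) ω := by
    filter_upwards [hpath] with ω hp
    have hhit : (H - G) (τ ω) ω ∈ ({0} : Set ℝ) :=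
      hittingBtwn_mem_set ⟨N, ⟨N.zero_le, le_rfl⟩, by simp [hp.terminal]⟩
    have hbefore : ∀ k < τ ω, H k ω ≠ G k ω := fun k hk => by
      simpa [sub_eq_zero] using notMem_of_lt_hittingBtwn hk k.zero_le
    linarith [hp.sub_eq (hτN ω) (by simpa [sub_eq_zero] using hhit) hbefore]
  refine ⟨integral_congr_ae (hpath.mono fun ω hp => hp.sup'_sub_eq),
    (IsGreatest.csSup_eq ?_).symm⟩
  refine ⟨⟨τ, ⟨hτ, hτN⟩, ?_⟩, ?_⟩
  · rw [← hM.integral_add_comp_stoppingTime hM0 hH0int hτ hτN]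
    exact integral_congr_ae hGτ
  · rintro _ ⟨σ, ⟨hσ, hσN⟩, rfl⟩
    refine integral_comp_stoppingTime_le_of_le_add_martingale hM hM0 hH0int hGint ?_ hσ hσN
    filter_upwards [hpath] with ω hp n hn
    linarith [hp.sub_le hn]
end
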